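/- arXiv:2009.13100 — 6 statements merged into one kernel-verified Lean document; each statement's English description precedes it below -/
import Mathlib

section
/- Let d ≥ 1, k > 0, and let a ≥ 1 and b ≥ 0 be natural numbers. Then for all q ∈ ℝ^d one has r̄(q;k)^a · (‖q‖² + r̄(q;k))^b ≤ k^{2(a+b)} · (1 + b/a)^b. Equivalently, in the scaled variable y = ‖q‖²/k² ≥ 0: (y/(e^y − 1))^a · (y·e^y/(e^y − 1))^b ≤ (1 + b/a)^b for all y ≥ 0 (with the value at y = 0 taken as the continuous limit 1). -/
/-!
With `y = ‖q‖²/k²` the left-hand side is `k^{2(a+b)} f(y)^a g(y)^b`, where `f(y) = y/(eʸ - 1)` and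
`g(y) = y eʸ/(eʸ - 1)`. From `1 + y ≤ eʸ` one gets `f(y) ≤ (1 + y) e^{-y}` and
`g(y) ≤ 1 + y`, so it suffices to bound `(1 + y)^{a+b} e^{-ay}`. Writing `c = 1 + b/a`, so that
`(a + b)/c = a`, the inequality `t^n ≤ e^{n(t-1)}` at `t = (1 + y)/c` bounds this by
`c^{a+b} e^{-b}`, and the same inequality at `t = c` gives `c^a ≤ e^b`.
-/

open Classical in
/-- The exponential regulator `r̄(q;k) = ‖q‖²/(exp(‖q‖²/k²) − 1)`, extended
continuously by `r̄(0;k) = k²`. -/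
noncomputable def rbar (d : ℕ) (q : EuclideanSpace ℝ (Fin d)) (k : ℝ) : ℝ :=
  if q = 0 then k ^ 2 else ‖q‖ ^ 2 / (Real.exp (‖q‖ ^ 2 / k ^ 2) - 1)

open Real

lemma pow_le_exp_mul_sub_one {t : ℝ} (ht : 0 ≤ t) (n : ℕ) : t ^ n ≤ exp (n * (t - 1)) := by
  calc t ^ n ≤ exp (t - 1) ^ n := by
        gcongr
        linarith [add_one_le_exp (t - 1)]
    _ = exp (n * (t - 1)) := (exp_nat_mul _ n).symm

lemma div_exp_sub_one_le {y : ℝ} (hy : 0 < y) : y / (exp y - 1) ≤ (1 + y) * exp (-y) := by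
  have hexp : 1 + y ≤ exp y := by linarith [add_one_le_exp y]
  have hE : 0 < exp y - 1 := by linarith [add_one_lt_exp hy.ne']
  rw [div_le_iff₀ hE, exp_neg]
  field_simp
  nlinarith

lemma mul_exp_div_exp_sub_one_le {y : ℝ} (hy : 0 < y) : y * exp y / (exp y - 1) ≤ 1 + y := by
  have hE : 0 < exp y - 1 := by linarith [add_one_lt_exp hy.ne']
  rw [div_le_iff₀ hE]
  nlinarith [add_one_le_exp y]

lemma one_add_pow_mul_exp_le {a : ℕ} (ha : 0 < a) (b : ℕ) {y : ℝ} (hy : 0 ≤ y) :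
    (1 + y) ^ (a + b) * exp (-(a * y)) ≤ (1 + (b : ℝ) / a) ^ b := by
  set c : ℝ := 1 + (b : ℝ) / a with hc_def
  have ha' : (0 : ℝ) < a := by exact_mod_cast ha
  have hc : 0 < c := by positivity
  have hquot : ((1 + y) / c) ^ (a + b) ≤ exp (a * y - b) := by
    convert pow_le_exp_mul_sub_one (by positivity : 0 ≤ (1 + y) / c) (a + b) using 2
    rw [hc_def]
    field_simp
    push_cast
    ring
  have hca : c ^ a ≤ exp b := by
    convert pow_le_exp_mul_sub_one hc.le a using 2
    rw [hc_def]
    field_simp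
    ring
  calc (1 + y) ^ (a + b) * exp (-(a * y))
      = c ^ (a + b) * ((1 + y) / c) ^ (a + b) * exp (-(a * y)) := by
        rw [div_pow]
        field_simp
    _ ≤ c ^ (a + b) * exp (a * y - b) * exp (-(a * y)) := by gcongr
    _ = c ^ b * (c ^ a * exp (-b)) := by
        rw [mul_assoc, ← exp_add, pow_add]
        ring_nf
    _ ≤ c ^ b * (exp b * exp (-b)) := by gcongr
    _ = c ^ b := by rw [← exp_add, add_neg_cancel, exp_zero, mul_one]

lemma scaled_regulator_bound {a : ℕ} (ha : 0 < a) (b : ℕ) {y : ℝ} (hy : 0 < y) :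
    (y / (exp y - 1)) ^ a * (y * exp y / (exp y - 1)) ^ b ≤ (1 + (b : ℝ) / a) ^ b := by
  have hE : 0 < exp y - 1 := by linarith [add_one_lt_exp hy.ne']
  calc (y / (exp y - 1)) ^ a * (y * exp y / (exp y - 1)) ^ b
      ≤ ((1 + y) * exp (-y)) ^ a * (1 + y) ^ b := by
        gcongr
        exacts [div_exp_sub_one_le hy, mul_exp_div_exp_sub_one_le hy]
    _ = (1 + y) ^ (a + b) * exp (-(a * y)) := by
        rw [mul_pow, ← exp_nat_mul, pow_add]
        ring_nf
    _ ≤ (1 + (b : ℝ) / a) ^ b := one_add_pow_mul_exp_le ha b hy.le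

section Regulator

variable {d : ℕ} {q : EuclideanSpace ℝ (Fin d)} {k : ℝ}

lemma rbar_zero : rbar d 0 k = k ^ 2 := by
  simp [rbar]

lemma rbar_of_ne_zero (hq : q ≠ 0) (hk : k ≠ 0) :
    rbar d q k = k ^ 2 * (‖q‖ ^ 2 / k ^ 2 / (exp (‖q‖ ^ 2 / k ^ 2) - 1)) := by
  rw [rbar, if_neg hq]
  field_simp

lemma norm_sq_add_rbar_of_ne_zero (hq : q ≠ 0) (hk : k ≠ 0) :
    ‖q‖ ^ 2 + rbar d q k
      = k ^ 2 * (‖q‖ ^ 2 / k ^ 2 * exp (‖q‖ ^ 2 / k ^ 2) / (exp (‖q‖ ^ 2 / k ^ 2) - 1)) := by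
  have hy : 0 < ‖q‖ ^ 2 / k ^ 2 := by positivity
  have hE : exp (‖q‖ ^ 2 / k ^ 2) - 1 ≠ 0 := by linarith [add_one_lt_exp hy.ne']
  rw [rbar_of_ne_zero hq hk]
  field_simp
  ring

end Regulator

theorem stmt_0_general (d : ℕ) (k : ℝ) (hk : 0 < k) (a b : ℕ) (ha : 1 ≤ a) :
    (∀ q : EuclideanSpace ℝ (Fin d),
      rbar d q k ^ a * (‖q‖ ^ 2 + rbar d q k) ^ b
        ≤ k ^ (2 * (a + b)) * (1 + (b : ℝ) / (a : ℝ)) ^ b) ∧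
    (∀ y : ℝ, 0 < y →
      (y / (Real.exp y - 1)) ^ a * (y * Real.exp y / (Real.exp y - 1)) ^ b
        ≤ (1 + (b : ℝ) / (a : ℝ)) ^ b) := by
  refine ⟨fun q => ?_, fun y hy => scaled_regulator_bound ha b hy⟩
  rw [pow_mul, pow_add]
  rcases eq_or_ne q 0 with rfl | hq
  · rw [rbar_zero, norm_zero, zero_pow two_ne_zero, zero_add]
    exact le_mul_of_one_le_right (by positivity) (one_le_pow₀ (le_add_of_nonneg_right (by positivity)))
  · have hy : 0 < ‖q‖ ^ 2 / k ^ 2 := by positivity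
    rw [norm_sq_add_rbar_of_ne_zero hq hk.ne', rbar_of_ne_zero hq hk.ne', mul_pow, mul_pow,
      mul_mul_mul_comm]
    exact mul_le_mul_of_nonneg_left (scaled_regulator_bound ha b hy) (by positivity)

theorem stmt_0 (d : ℕ) (hd : 1 ≤ d) (k : ℝ) (hk : 0 < k) (a b : ℕ) (ha : 1 ≤ a) :
    (∀ q : EuclideanSpace ℝ (Fin d),
      rbar d q k ^ a * (‖q‖ ^ 2 + rbar d q k) ^ b
        ≤ k ^ (2 * (a + b)) * (1 + (b : ℝ) / (a : ℝ)) ^ b) ∧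
    (∀ y : ℝ, 0 < y →
      (y / (Real.exp y - 1)) ^ a * (y * Real.exp y / (Real.exp y - 1)) ^ b
        ≤ (1 + (b : ℝ) / (a : ℝ)) ^ b) :=
  stmt_0_general d k hk a b ha
end

section
/- Define constants β^l_{a,b} for l ∈ ℕ₀ and a,b ∈ ℤ by β⁰_{1,0} = 1, β⁰_{a,b} = 0 otherwise, and the recursion β^{l+1}_{a,b} = (2 − l − 2a − 2b) β^l_{a,b} + 2a β^l_{a,b−1} + 2b β^l_{a−1,b}. Then for every l ∈ ℕ₀, every q ∈ ℝ^d and every k > 0, the l-th derivative of the exponential regulator with respect to k satisfies ∂_k^l r̄(q;k) = Σ_{a=1}^{l+1} Σ_{b=0}^{l+1−a} β^l_{a,b} · k^{2−l−2a−2b} · r̄(q;k)^a · (‖q‖² + r̄(q;k))^b. -/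
open Classical in
/-- The constants `β^l_{a,b}`: `β⁰_{1,0} = 1`, `β⁰_{a,b} = 0` otherwise, and
`β^{l+1}_{a,b} = (2 − l − 2a − 2b) β^l_{a,b} + 2a β^l_{a,b−1} + 2b β^l_{a−1,b}`. -/
noncomputable def betaC : ℕ → ℤ → ℤ → ℝ
  | 0, a, b => if a = 1 ∧ b = 0 then 1 else 0
  | (l + 1), a, b =>
      (2 - (l : ℝ) - 2 * (a : ℝ) - 2 * (b : ℝ)) * betaC l a b
        + 2 * (a : ℝ) * betaC l a (b - 1) + 2 * (b : ℝ) * betaC l (a - 1) b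

lemma betaC_eq_zero : ∀ (l : ℕ) (a b : ℤ), (a ≤ 0 ∨ b < 0 ∨ (l:ℤ) + 1 < a + b) →
    betaC l a b = 0 := by
  intro l
  induction l with
  | zero =>
    intro a b h
    simp only [betaC]
    rw [if_neg]
    rintro ⟨rfl, rfl⟩
    norm_num at h
  | succ l ih =>
    intro a b h
    simp only [betaC]
    have hl : ((l + 1 : ℕ) : ℤ) = (l : ℤ) + 1 := by push_cast; ring
    rw [hl] at h
    rcases h with h | h | h
    · rw [ih a b (Or.inl h), ih a (b-1) (Or.inl h), ih (a-1) b (Or.inl (by omega))]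
      ring
    · rw [ih a b (Or.inr (Or.inl h)), ih a (b-1) (Or.inr (Or.inl (by omega))),
        ih (a-1) b (Or.inr (Or.inl h))]
      ring
    · rw [ih a b (Or.inr (Or.inr (by omega))),
        ih a (b-1) (Or.inr (Or.inr (by omega))),
        ih (a-1) b (Or.inr (Or.inr (by omega)))]
      ring

lemma rbar_pos (d : ℕ) (q : EuclideanSpace ℝ (Fin d)) (k : ℝ) (hk : 0 < k) :
    0 < rbar d q k := by
  unfold rbar
  split_ifs with h
  · positivity
  · have hq : 0 < ‖q‖ := norm_pos_iff.mpr h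
    have : 0 < Real.exp (‖q‖ ^ 2 / k ^ 2) - 1 := by
      have : (1:ℝ) < Real.exp (‖q‖ ^ 2 / k ^ 2) := by
        rw [Real.one_lt_exp_iff]; positivity
      linarith
    positivity

lemma hasDerivAt_rbar (d : ℕ) (q : EuclideanSpace ℝ (Fin d)) (k : ℝ) (hk : 0 < k) :
    HasDerivAt (rbar d q)
      (2 * rbar d q k * (‖q‖ ^ 2 + rbar d q k) / k ^ 3) k := by
  unfold rbar
  split_ifs with h
  · subst h
    have := hasDerivAt_pow 2 k
    refine this.congr_deriv ?_
    symm
    simp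
    field_simp
  · set c := ‖q‖ ^ 2 with hc
    have hq : 0 < ‖q‖ := norm_pos_iff.mpr h
    have hc0 : 0 < c := by positivity
    have hk0 : k ≠ 0 := ne_of_gt hk
    have hE : (1:ℝ) < Real.exp (c / k ^ 2) := by
      rw [Real.one_lt_exp_iff]; positivity
    have hE0 : Real.exp (c / k ^ 2) - 1 ≠ 0 := by linarith
    have h1 : HasDerivAt (fun s : ℝ => c / s ^ 2)
        ((0 * k ^ 2 - c * ((2:ℕ) * k ^ (2-1))) / (k ^ 2) ^ 2) k :=
      (hasDerivAt_const k c).div (hasDerivAt_pow 2 k) (by positivity)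
    have h2 := (h1.exp).sub_const 1
    have h3 := (hasDerivAt_const k c).div h2 hE0
    refine h3.congr_deriv ?_
    symm
    field_simp
    ring

lemma hasDerivAt_term (d : ℕ) (q : EuclideanSpace ℝ (Fin d)) (m a b : ℤ) (C : ℝ)
    (k : ℝ) (hk : 0 < k) :
    HasDerivAt (fun s => C * s ^ m * rbar d q s ^ a * (‖q‖ ^ 2 + rbar d q s) ^ b)
      ((m : ℝ) * C * k ^ (m - 1) * rbar d q k ^ a * (‖q‖ ^ 2 + rbar d q k) ^ b
        + 2 * a * C * k ^ (m - 3) * rbar d q k ^ a * (‖q‖ ^ 2 + rbar d q k) ^ (b + 1)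
        + 2 * b * C * k ^ (m - 3) * rbar d q k ^ (a + 1) * (‖q‖ ^ 2 + rbar d q k) ^ b) k := by
  have hk0 : k ≠ 0 := ne_of_gt hk
  have hr0 : rbar d q k ≠ 0 := ne_of_gt (rbar_pos d q k hk)
  have hw0 : ‖q‖ ^ 2 + rbar d q k ≠ 0 := by
    have := rbar_pos d q k hk; positivity
  have hr := hasDerivAt_rbar d q k hk
  have f1 : HasDerivAt (fun s : ℝ => C * s ^ m) (C * ((m : ℝ) * k ^ (m - 1))) k :=
    (hasDerivAt_zpow m k (Or.inl hk0)).const_mul C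
  have f2 : HasDerivAt (fun s => rbar d q s ^ a)
      (((a : ℝ) * rbar d q k ^ (a - 1)) * (2 * rbar d q k * (‖q‖ ^ 2 + rbar d q k) / k ^ 3)) k :=
    (hasDerivAt_zpow a (rbar d q k) (Or.inl hr0)).comp k hr
  have f3 : HasDerivAt (fun s => (‖q‖ ^ 2 + rbar d q s) ^ b)
      (((b : ℝ) * (‖q‖ ^ 2 + rbar d q k) ^ (b - 1))
        * (2 * rbar d q k * (‖q‖ ^ 2 + rbar d q k) / k ^ 3)) k := by
    have hw : HasDerivAt (fun s => ‖q‖ ^ 2 + rbar d q s)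
        (2 * rbar d q k * (‖q‖ ^ 2 + rbar d q k) / k ^ 3) k := (hr.const_add (‖q‖ ^ 2))
    exact (hasDerivAt_zpow b (‖q‖ ^ 2 + rbar d q k) (Or.inl hw0)).comp k hw
  have h := (f1.mul f2).mul f3
  refine h.congr_deriv ?_
  symm
  rw [zpow_sub_one₀ hr0, zpow_sub_one₀ hw0, zpow_add_one₀ hr0, zpow_add_one₀ hw0,
    zpow_sub₀ hk0, zpow_sub₀ hk0, zpow_one]
  have h3 : (k : ℝ) ^ (3:ℤ) = k ^ (3:ℕ) := by
    rw [show (3:ℤ) = ((3:ℕ):ℤ) from rfl, zpow_natCast]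
  rw [h3]
  simp only [Pi.mul_apply]
  field_simp

lemma Gsum_eq (l : ℕ) (k r w : ℝ) :
    ∑ p ∈ Finset.Icc (1:ℤ) ((l:ℤ)+1) ×ˢ Finset.Icc (0:ℤ) ((l:ℤ)+1),
      (((2-(l:ℤ)-2*p.1-2*p.2 : ℤ) : ℝ) * betaC l p.1 p.2
          * k ^ (2-(l:ℤ)-2*p.1-2*p.2 - 1) * r ^ p.1 * w ^ p.2
        + 2*(p.1:ℝ)*betaC l p.1 p.2 * k ^ (2-(l:ℤ)-2*p.1-2*p.2 - 3) * r ^ p.1 * w ^ (p.2+1)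
        + 2*(p.2:ℝ)*betaC l p.1 p.2 * k ^ (2-(l:ℤ)-2*p.1-2*p.2 - 3) * r ^ (p.1+1) * w ^ p.2)
    = ∑ p ∈ Finset.Icc (1:ℤ) ((l:ℤ)+2) ×ˢ Finset.Icc (0:ℤ) ((l:ℤ)+2),
        betaC (l+1) p.1 p.2 * k ^ (2-((l:ℤ)+1)-2*p.1-2*p.2) * r ^ p.1 * w ^ p.2 := by
  have hbeta : ∀ a b : ℤ, betaC (l+1) a b
      = (2 - (l : ℝ) - 2 * (a : ℝ) - 2 * (b : ℝ)) * betaC l a b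
        + 2 * (a : ℝ) * betaC l a (b - 1) + 2 * (b : ℝ) * betaC l (a - 1) b := by
    intro a b; rfl
  have split : ∀ p : ℤ × ℤ,
      betaC (l+1) p.1 p.2 * k ^ (2-((l:ℤ)+1)-2*p.1-2*p.2) * r ^ p.1 * w ^ p.2
      = (2 - (l:ℝ) - 2*(p.1:ℝ) - 2*(p.2:ℝ)) * betaC l p.1 p.2
          * k ^ (2-((l:ℤ)+1)-2*p.1-2*p.2) * r ^ p.1 * w ^ p.2
        + 2*(p.1:ℝ) * betaC l p.1 (p.2-1)
          * k ^ (2-((l:ℤ)+1)-2*p.1-2*p.2) * r ^ p.1 * w ^ p.2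
        + 2*(p.2:ℝ) * betaC l (p.1-1) p.2
          * k ^ (2-((l:ℤ)+1)-2*p.1-2*p.2) * r ^ p.1 * w ^ p.2 := by
    intro p; rw [hbeta]; ring
  rw [Finset.sum_add_distrib, Finset.sum_add_distrib,
    Finset.sum_congr rfl (fun p _ => split p),
    Finset.sum_add_distrib, Finset.sum_add_distrib]
  congr 1
  · congr 1
    · trans (∑ p ∈ Finset.Icc (1:ℤ) ((l:ℤ)+1) ×ˢ Finset.Icc (0:ℤ) ((l:ℤ)+1),
        (2 - (l:ℝ) - 2*(p.1:ℝ) - 2*(p.2:ℝ)) * betaC l p.1 p.2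
          * k ^ (2-((l:ℤ)+1)-2*p.1-2*p.2) * r ^ p.1 * w ^ p.2)
      · refine Finset.sum_congr rfl fun p _ => ?_
        rw [show 2-(l:ℤ)-2*p.1-2*p.2-1 = 2-((l:ℤ)+1)-2*p.1-2*p.2 from by ring]
        push_cast
        ring
      · apply Finset.sum_subset
        · apply Finset.product_subset_product <;>
            exact Finset.Icc_subset_Icc le_rfl (by omega)
        · intro p hp hnp
          simp only [Finset.mem_product, Finset.mem_Icc] at hp hnp
          rw [betaC_eq_zero l p.1 p.2 (by omega)]
          ring
    · trans (∑ p ∈ Finset.Icc (1:ℤ) ((l:ℤ)+1) ×ˢ Finset.Icc (1:ℤ) ((l:ℤ)+2),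
        2*(p.1:ℝ) * betaC l p.1 (p.2-1)
          * k ^ (2-((l:ℤ)+1)-2*p.1-2*p.2) * r ^ p.1 * w ^ p.2)
      · refine Finset.sum_nbij' (i := fun p : ℤ × ℤ => (p.1, p.2 + 1))
          (j := fun p : ℤ × ℤ => (p.1, p.2 - 1)) ?_ ?_ ?_ ?_ ?_
        · intro p hp
          simp only [Finset.mem_product, Finset.mem_Icc] at hp ⊢
          omega
        · intro p hp
          simp only [Finset.mem_product, Finset.mem_Icc] at hp ⊢
          omega
        · intro p _; simp
        · intro p _; simp
        · intro p hp
          simp only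
          rw [show (p.2 + 1 : ℤ) - 1 = p.2 from by ring,
            show 2-((l:ℤ)+1)-2*p.1-2*(p.2+1) = 2-(l:ℤ)-2*p.1-2*p.2-3 from by ring]
      · apply Finset.sum_subset
        · apply Finset.product_subset_product <;>
            exact Finset.Icc_subset_Icc (by omega) (by omega)
        · intro p hp hnp
          simp only [Finset.mem_product, Finset.mem_Icc] at hp hnp
          rw [betaC_eq_zero l p.1 (p.2-1) (by omega)]
          ring
  · trans (∑ p ∈ Finset.Icc (2:ℤ) ((l:ℤ)+2) ×ˢ Finset.Icc (0:ℤ) ((l:ℤ)+1),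
      2*(p.2:ℝ) * betaC l (p.1-1) p.2
        * k ^ (2-((l:ℤ)+1)-2*p.1-2*p.2) * r ^ p.1 * w ^ p.2)
    · refine Finset.sum_nbij' (i := fun p : ℤ × ℤ => (p.1 + 1, p.2))
        (j := fun p : ℤ × ℤ => (p.1 - 1, p.2)) ?_ ?_ ?_ ?_ ?_
      · intro p hp
        simp only [Finset.mem_product, Finset.mem_Icc] at hp ⊢
        omega
      · intro p hp
        simp only [Finset.mem_product, Finset.mem_Icc] at hp ⊢
        omega
      · intro p _; simp
      · intro p _; simp
      · intro p hp
        simp only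
        rw [show (p.1 + 1 : ℤ) - 1 = p.1 from by ring,
          show 2-((l:ℤ)+1)-2*(p.1+1)-2*p.2 = 2-(l:ℤ)-2*p.1-2*p.2-3 from by ring]
    · apply Finset.sum_subset
      · apply Finset.product_subset_product <;>
          exact Finset.Icc_subset_Icc (by omega) (by omega)
      · intro p hp hnp
        simp only [Finset.mem_product, Finset.mem_Icc] at hp hnp
        rw [betaC_eq_zero l (p.1-1) p.2 (by omega)]
        ring

lemma main_aux (d : ℕ) (q : EuclideanSpace ℝ (Fin d)) :
    ∀ (l : ℕ) (k : ℝ), 0 < k →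
      iteratedDeriv l (rbar d q) k
        = ∑ p ∈ Finset.Icc (1:ℤ) ((l:ℤ)+1) ×ˢ Finset.Icc (0:ℤ) ((l:ℤ)+1),
            betaC l p.1 p.2 * k ^ (2-(l:ℤ)-2*p.1-2*p.2)
              * rbar d q k ^ p.1 * (‖q‖ ^ 2 + rbar d q k) ^ p.2 := by
  intro l
  induction l with
  | zero =>
    intro k hk
    rw [iteratedDeriv_zero]
    norm_num
    rw [show Finset.Icc (0:ℤ) 1 = {0, 1} from by decide]
    simp [betaC]
  | succ l ih =>
    intro k hk
    rw [iteratedDeriv_succ]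
    have hev : deriv (iteratedDeriv l (rbar d q)) k
        = deriv (fun s => ∑ p ∈ Finset.Icc (1:ℤ) ((l:ℤ)+1) ×ˢ Finset.Icc (0:ℤ) ((l:ℤ)+1),
            betaC l p.1 p.2 * s ^ (2-(l:ℤ)-2*p.1-2*p.2)
              * rbar d q s ^ p.1 * (‖q‖ ^ 2 + rbar d q s) ^ p.2) k := by
      apply Filter.EventuallyEq.deriv_eq
      filter_upwards [isOpen_Ioi.mem_nhds hk] with s hs
      exact ih s hs
    rw [hev]
    have hD : HasDerivAt
        (fun s => ∑ p ∈ Finset.Icc (1:ℤ) ((l:ℤ)+1) ×ˢ Finset.Icc (0:ℤ) ((l:ℤ)+1),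
            betaC l p.1 p.2 * s ^ (2-(l:ℤ)-2*p.1-2*p.2)
              * rbar d q s ^ p.1 * (‖q‖ ^ 2 + rbar d q s) ^ p.2)
        (∑ p ∈ Finset.Icc (1:ℤ) ((l:ℤ)+1) ×ˢ Finset.Icc (0:ℤ) ((l:ℤ)+1),
          (((2-(l:ℤ)-2*p.1-2*p.2 : ℤ) : ℝ) * betaC l p.1 p.2
              * k ^ (2-(l:ℤ)-2*p.1-2*p.2 - 1) * rbar d q k ^ p.1
              * (‖q‖ ^ 2 + rbar d q k) ^ p.2
            + 2*(p.1:ℝ)*betaC l p.1 p.2 * k ^ (2-(l:ℤ)-2*p.1-2*p.2 - 3)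
              * rbar d q k ^ p.1 * (‖q‖ ^ 2 + rbar d q k) ^ (p.2+1)
            + 2*(p.2:ℝ)*betaC l p.1 p.2 * k ^ (2-(l:ℤ)-2*p.1-2*p.2 - 3)
              * rbar d q k ^ (p.1+1) * (‖q‖ ^ 2 + rbar d q k) ^ p.2)) k := by
      apply HasDerivAt.fun_sum
      intro p hp
      exact hasDerivAt_term d q (2-(l:ℤ)-2*p.1-2*p.2) p.1 p.2 (betaC l p.1 p.2) k hk
    rw [hD.deriv, Gsum_eq l k (rbar d q k) (‖q‖ ^ 2 + rbar d q k)]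
    have hc : ((l + 1 : ℕ) : ℤ) = (l:ℤ) + 1 := by push_cast; ring
    rw [hc, show (l:ℤ)+1+1 = (l:ℤ)+2 from by ring]

theorem stmt_3 (d : ℕ) (hd : 1 ≤ d) (l : ℕ) (q : EuclideanSpace ℝ (Fin d)) (k : ℝ)
    (hk : 0 < k) :
    iteratedDeriv l (fun s => rbar d q s) k =
      ∑ a ∈ Finset.Icc 1 (l + 1), ∑ b ∈ Finset.Icc 0 (l + 1 - a),
        betaC l (a : ℤ) (b : ℤ) * k ^ ((2 : ℤ) - (l : ℤ) - 2 * (a : ℤ) - 2 * (b : ℤ))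
          * rbar d q k ^ a * (‖q‖ ^ 2 + rbar d q k) ^ b := by
  have h := main_aux d q l k hk
  rw [show (fun s => rbar d q s) = rbar d q from rfl, h, Finset.sum_product]
  refine Finset.sum_nbij' (i := fun a : ℤ => a.toNat) (j := fun a : ℕ => (a : ℤ))
    ?_ ?_ ?_ ?_ ?_
  · intro a ha
    simp only [Finset.mem_Icc] at ha ⊢
    omega
  · intro a ha
    simp only [Finset.mem_Icc] at ha ⊢
    omega
  · intro a ha
    simp only [Finset.mem_Icc] at ha
    omega
  · intro a ha
    simp only [Finset.mem_Icc] at ha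
    omega
  · intro a ha
    simp only [Finset.mem_Icc] at ha
    obtain ⟨n, rfl⟩ : ∃ n : ℕ, (n : ℤ) = a := ⟨a.toNat, by omega⟩
    have hn1 : 1 ≤ n := by omega
    have hn2 : n ≤ l + 1 := by omega
    dsimp only
    rw [Int.toNat_natCast]
    symm
    trans (∑ b ∈ Finset.Icc (0:ℕ) (l + 1),
        betaC l (n:ℤ) (b:ℤ) * k ^ ((2:ℤ) - (l:ℤ) - 2*(n:ℤ) - 2*(b:ℤ))
          * rbar d q k ^ n * (‖q‖ ^ 2 + rbar d q k) ^ b)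
    · apply Finset.sum_subset
      · exact Finset.Icc_subset_Icc le_rfl (by omega)
      · intro b hb hnb
        simp only [Finset.mem_Icc] at hb hnb
        rw [betaC_eq_zero l (n:ℤ) (b:ℤ) (by omega)]
        ring
    · refine Finset.sum_nbij' (i := fun b : ℕ => (b : ℤ)) (j := fun b : ℤ => b.toNat)
        ?_ ?_ ?_ ?_ ?_
      · intro b hb
        simp only [Finset.mem_Icc] at hb ⊢
        omega
      · intro b hb
        simp only [Finset.mem_Icc] at hb ⊢
        omega
      · intro b hb
        omega
      · intro b hb
        simp only [Finset.mem_Icc] at hb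
        omega
      · intro b hb
        rw [zpow_natCast, zpow_natCast]
end

section
/- For every n ∈ ℕ₀ there exists a constant R_n ≥ 0 such that for all k > 0, sup_{q ∈ ℝ^d} |∂_k^n r̄(q;k)| ≤ R_n · k^{2−n}. In particular one may take R_n = Σ_{a=1}^{n+1} Σ_{b=0}^{n+1−a} |β^n_{a,b}| (1 + b/a)^b, where the β^l_{a,b} are defined by β⁰_{1,0} = 1, β⁰_{a,b} = 0 otherwise, and β^{l+1}_{a,b} = (2 − l − 2a − 2b) β^l_{a,b} + 2a β^l_{a,b−1} + 2b β^l_{a−1,b}. -/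
/-
Write `x = c / k²` with `c = ‖q‖²`, `Y = x / (eˣ - 1)` and `Z = x eˣ / (eˣ - 1)`, so that
`r̄ = k² Y`. Since `x ∂ₓ Y = Y - YZ`, `x ∂ₓ Z = Z - YZ` and `k ∂ₖ x = -2x`, these obey
`k ∂ₖ Y = 2(YZ - Y)` and `k ∂ₖ Z = 2(YZ - Z)`; hence `∂ₖ` maps `k^(2-n) ∑ β^n_{a,b} Yᵃ Zᵇ` to the
same expression for `n + 1`, which is exactly the recursion of `β`. The bound follows from
`Y ≤ (1 + x) e⁻ˣ`, `Z ≤ 1 + x` and `(1 + x)^(a+b) ≤ (1 + b/a)^b e^(a x)`. For `q = 0` the same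
argument runs with `Y = Z = 1`.
-/

open Finset

lemma betaC_eq_zero_s4 (n : ℕ) {a b : ℤ} (h : a ≤ 0 ∨ b < 0 ∨ (n : ℤ) + 1 < a + b) :
    betaC n a b = 0 := by
  induction n generalizing a b with
  | zero =>
    simp only [betaC, ite_eq_right_iff, and_imp]
    rintro rfl rfl
    omega
  | succ l ih =>
    simp only [betaC]
    rw [ih (by omega), ih (by omega), ih (by omega)]
    ring

lemma sum_range_succ_sub_one_mul (M : ℕ) (u : ℤ → ℝ) (v : ℕ → ℝ) (h₀ : u (-1) = 0)
    (hM : u M = 0) :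
    ∑ i ∈ range (M + 1), u (i - 1) * v i = ∑ i ∈ range (M + 1), u i * v (i + 1) := by
  rw [sum_range_succ', sum_range_succ]
  simp [h₀, hM]

lemma sum_betaC_succ_mul (n M : ℕ) (hM : n + 2 ≤ M) (Y Z : ℝ) :
    ∑ a ∈ range (M + 1), ∑ b ∈ range (M + 1), betaC (n + 1) a b * (Y ^ a * Z ^ b) =
      ∑ a ∈ range (M + 1), ∑ b ∈ range (M + 1), betaC n a b *
        ((2 - n - 2 * a - 2 * b) * (Y ^ a * Z ^ b) + 2 * a * (Y ^ a * Z ^ (b + 1))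
          + 2 * b * (Y ^ (a + 1) * Z ^ b)) := by
  have shift_b : ∑ a ∈ range (M + 1), ∑ b ∈ range (M + 1),
      betaC n a (b - 1) * (2 * a * (Y ^ a * Z ^ b)) =
      ∑ a ∈ range (M + 1), ∑ b ∈ range (M + 1),
      betaC n a b * (2 * a * (Y ^ a * Z ^ (b + 1))) :=
    sum_congr rfl fun a _ => sum_range_succ_sub_one_mul M (betaC n a) _
      (betaC_eq_zero_s4 n (by omega)) (betaC_eq_zero_s4 n (by omega))
  have shift_a : ∑ a ∈ range (M + 1), ∑ b ∈ range (M + 1),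
      betaC n (a - 1) b * (2 * b * (Y ^ a * Z ^ b)) =
      ∑ a ∈ range (M + 1), ∑ b ∈ range (M + 1),
      betaC n a b * (2 * b * (Y ^ (a + 1) * Z ^ b)) := by
    rw [sum_comm]
    conv_rhs => rw [sum_comm]
    exact sum_congr rfl fun b _ => sum_range_succ_sub_one_mul M (betaC n · b) _
      (betaC_eq_zero_s4 n (by omega)) (betaC_eq_zero_s4 n (by omega))
  calc _ = ∑ a ∈ range (M + 1), ∑ b ∈ range (M + 1),
          (betaC n a b * ((2 - n - 2 * a - 2 * b) * (Y ^ a * Z ^ b))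
            + betaC n a (b - 1) * (2 * a * (Y ^ a * Z ^ b))
            + betaC n (a - 1) b * (2 * b * (Y ^ a * Z ^ b))) := by
        refine sum_congr rfl fun a _ => sum_congr rfl fun b _ => ?_
        simp only [betaC]
        push_cast
        ring
    _ = ∑ a ∈ range (M + 1), ∑ b ∈ range (M + 1),
          (betaC n a b * ((2 - n - 2 * a - 2 * b) * (Y ^ a * Z ^ b))
            + betaC n a b * (2 * a * (Y ^ a * Z ^ (b + 1)))
            + betaC n a b * (2 * b * (Y ^ (a + 1) * Z ^ b))) := by
        simp only [sum_add_distrib]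
        rw [shift_b, shift_a]
    _ = _ := by simp only [mul_add]

lemma hasDerivAt_zpow_mul_pow_mul_pow {Y Z : ℝ → ℝ} {k : ℝ} (hk : k ≠ 0)
    (hY : HasDerivAt Y (2 * (Y k * Z k - Y k) / k) k)
    (hZ : HasDerivAt Z (2 * (Y k * Z k - Z k) / k) k) (m : ℤ) (a b : ℕ) :
    HasDerivAt (fun s => s ^ m * (Y s ^ a * Z s ^ b))
      (k ^ (m - 1) * ((m - 2 * a - 2 * b) * (Y k ^ a * Z k ^ b)
        + 2 * a * (Y k ^ a * Z k ^ (b + 1)) + 2 * b * (Y k ^ (a + 1) * Z k ^ b))) k := by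
  refine ((hasDerivAt_zpow m k (.inl hk)).mul
    ((hY.fun_pow a).mul (hZ.fun_pow b))).congr_deriv ?_
  rw [zpow_sub_one₀ hk]
  rcases a with _ | a <;> rcases b with _ | b <;>
    simp only [pow_succ, Pi.mul_apply] <;> push_cast <;> field_simp <;> ring

lemma sum_range_eq_sum_triangle (n : ℕ) (f : ℕ → ℕ → ℝ)
    (hf : ∀ a b : ℕ, betaC n a b = 0 → f a b = 0) :
    ∑ a ∈ range (n + 2), ∑ b ∈ range (n + 2), f a b =
      ∑ a ∈ Icc 1 (n + 1), ∑ b ∈ Icc 0 (n + 1 - a), f a b := by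
  calc _ = ∑ a ∈ Icc 1 (n + 1), ∑ b ∈ range (n + 2), f a b := by
        refine (sum_subset (fun a ha => by simp at ha ⊢; omega) fun a ha ha' => ?_).symm
        simp only [mem_range, mem_Icc] at ha ha'
        exact sum_eq_zero fun b _ => hf a b (betaC_eq_zero_s4 n (by omega))
    _ = _ := by
        refine sum_congr rfl fun a ha => (sum_subset (fun b hb => ?_) fun b hb hb' => ?_).symm
        all_goals simp only [mem_range, mem_Icc] at ha hb ⊢
        · omega
        · simp only [mem_Icc, not_and, not_le] at hb'
          exact hf a b (betaC_eq_zero_s4 n (by omega))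

/-- The constant `R_n`. -/
noncomputable def betaBound (n : ℕ) : ℝ :=
  ∑ a ∈ Icc 1 (n + 1), ∑ b ∈ Icc 0 (n + 1 - a), |betaC n a b| * (1 + (b : ℝ) / a) ^ b

lemma betaBound_nonneg (n : ℕ) : 0 ≤ betaBound n :=
  sum_nonneg fun _ _ => sum_nonneg fun _ _ => by positivity

/-- The `n`-th derivative of `k ↦ k² Y k` when `k Y' = 2(YZ - Y)` and `k Z' = 2(YZ - Z)`,
for every box `N ≥ n + 2` containing the support of `β^n`. -/
noncomputable def betaExpansion (N n : ℕ) (Y Z : ℝ → ℝ) (k : ℝ) : ℝ :=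
  ∑ a ∈ range N, ∑ b ∈ range N, betaC n a b * (k ^ (2 - n : ℤ) * (Y k ^ a * Z k ^ b))

section Expansion

variable {Y Z : ℝ → ℝ}

lemma hasDerivAt_betaExpansion {N n : ℕ} (hN : n + 3 ≤ N) {k : ℝ} (hk : k ≠ 0)
    (hY : HasDerivAt Y (2 * (Y k * Z k - Y k) / k) k)
    (hZ : HasDerivAt Z (2 * (Y k * Z k - Z k) / k) k) :
    HasDerivAt (betaExpansion N n Y Z) (betaExpansion N (n + 1) Y Z k) k := by
  obtain ⟨M, rfl⟩ : ∃ M, N = M + 1 := ⟨N - 1, by omega⟩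
  refine (HasDerivAt.fun_sum fun a _ => HasDerivAt.fun_sum fun b _ =>
    (hasDerivAt_zpow_mul_pow_mul_pow hk hY hZ _ a b).const_mul (betaC n a b)).congr_deriv ?_
  have hexp : (2 - (n + 1 : ℕ) : ℤ) = 2 - n - 1 := by push_cast; ring
  simp only [betaExpansion, hexp, mul_left_comm (betaC _ _ _) (k ^ ((2 : ℤ) - n - 1)),
    ← mul_sum, sum_betaC_succ_mul n M (by omega)]
  push_cast
  rfl

lemma betaExpansion_zero {N : ℕ} (hN : 2 ≤ N) (k : ℝ) :
    betaExpansion N 0 Y Z k = k ^ 2 * Y k := by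
  rw [betaExpansion, sum_eq_single_of_mem 1 (by simp; omega) fun a _ ha => ?_,
    sum_eq_single_of_mem 0 (by simp; omega) fun b _ hb => ?_]
  · simp [betaC]
  · simp [betaC, hb]
  · exact sum_eq_zero fun b _ => by simp [betaC, ha]

lemma iteratedDeriv_eq_betaExpansion {f : ℝ → ℝ} (hf : ∀ k > 0, f k = k ^ 2 * Y k)
    (hY : ∀ k > 0, HasDerivAt Y (2 * (Y k * Z k - Y k) / k) k)
    (hZ : ∀ k > 0, HasDerivAt Z (2 * (Y k * Z k - Z k) / k) k)
    (n : ℕ) {N : ℕ} (hN : n + 2 ≤ N) {k : ℝ} (hk : 0 < k) :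
    iteratedDeriv n f k = betaExpansion N n Y Z k := by
  induction n generalizing k with
  | zero => rw [iteratedDeriv_zero, hf k hk, betaExpansion_zero hN]
  | succ n ih =>
    have heq : iteratedDeriv n f =ᶠ[nhds k] betaExpansion N n Y Z :=
      Filter.eventuallyEq_of_mem (Ioi_mem_nhds hk) fun s hs => ih (by omega) hs
    rw [iteratedDeriv_succ, heq.deriv_eq]
    exact (hasDerivAt_betaExpansion hN hk.ne' (hY k hk) (hZ k hk)).deriv

lemma abs_betaExpansion_le (n : ℕ) {k : ℝ} (hk : 0 < k)
    (hYZ : ∀ a b : ℕ, 1 ≤ a → |Y k ^ a * Z k ^ b| ≤ (1 + (b : ℝ) / a) ^ b) :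
    |betaExpansion (n + 2) n Y Z k| ≤ betaBound n * k ^ (2 - n : ℤ) := by
  rw [betaExpansion, sum_range_eq_sum_triangle n _ fun a b h => by simp [h], betaBound, sum_mul]
  refine (abs_sum_le_sum_abs _ _).trans (sum_le_sum fun a ha => ?_)
  rw [sum_mul]
  refine (abs_sum_le_sum_abs _ _).trans (sum_le_sum fun b _ => ?_)
  rw [abs_mul, abs_mul, abs_of_pos (zpow_pos hk _), mul_assoc, mul_comm (_ ^ b)]
  gcongr
  exact hYZ a b (mem_Icc.1 ha).1

theorem abs_iteratedDeriv_le_betaBound {f : ℝ → ℝ} (hf : ∀ k > 0, f k = k ^ 2 * Y k)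
    (hY : ∀ k > 0, HasDerivAt Y (2 * (Y k * Z k - Y k) / k) k)
    (hZ : ∀ k > 0, HasDerivAt Z (2 * (Y k * Z k - Z k) / k) k)
    (hYZ : ∀ k > 0, ∀ a b : ℕ, 1 ≤ a → |Y k ^ a * Z k ^ b| ≤ (1 + (b : ℝ) / a) ^ b)
    (n : ℕ) {k : ℝ} (hk : 0 < k) :
    |iteratedDeriv n f k| ≤ betaBound n * k ^ (2 - n : ℤ) := by
  rw [iteratedDeriv_eq_betaExpansion hf hY hZ n le_rfl hk]
  exact abs_betaExpansion_le n hk (hYZ k hk)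

end Expansion

open Real

lemma one_add_pow_add_le_mul_exp_pow {x : ℝ} (hx : -1 ≤ x) {a : ℕ} (ha : 1 ≤ a) (b : ℕ) :
    (1 + x) ^ (a + b) ≤ (1 + (b : ℝ) / a) ^ b * exp x ^ a := by
  -- `1 + x = s` maximises `(1 + x) ^ (a + b) / exp (a * x)`
  set s : ℝ := 1 + b / a with hs
  have hs0 : 0 < s := by positivity
  set t : ℝ := (1 + x) / s with ht
  have ht0 : 0 ≤ t := div_nonneg (by linarith) hs0.le
  have ht_pow : t ^ (a + b) ≤ exp (a * x - b) := by
    calc t ^ (a + b) ≤ exp (t - 1) ^ (a + b) :=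
          pow_le_pow_left₀ ht0 (by linarith [add_one_le_exp (t - 1)]) _
      _ = exp (a * x - b) := by
          rw [← exp_nat_mul]
          congr 1
          rw [ht, hs]
          field_simp
          push_cast
          ring
  have hs_pow : s ^ a ≤ exp b := by
    calc s ^ a ≤ exp (b / a) ^ a :=
          pow_le_pow_left₀ hs0.le (by linarith [add_one_le_exp (b / a)]) _
      _ = exp b := by rw [← exp_nat_mul]; field_simp
  calc (1 + x) ^ (a + b) = s ^ b * s ^ a * t ^ (a + b) := by
        rw [← pow_add, add_comm b, ← mul_pow, ht, mul_div_cancel₀ _ hs0.ne']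
    _ ≤ s ^ b * exp b * exp (a * x - b) := by gcongr
    _ = s ^ b * exp x ^ a := by rw [mul_assoc, ← exp_add, ← exp_nat_mul]; ring_nf

noncomputable def expY (x : ℝ) : ℝ := x / (exp x - 1)

noncomputable def expZ (x : ℝ) : ℝ := x * exp x / (exp x - 1)

lemma abs_expY_pow_mul_expZ_pow_le {x : ℝ} (hx : 0 < x) {a : ℕ} (ha : 1 ≤ a) (b : ℕ) :
    |expY x ^ a * expZ x ^ b| ≤ (1 + (b : ℝ) / a) ^ b := by
  have hE : 1 + x ≤ exp x := by linarith [add_one_le_exp x]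
  have hE1 : 0 < exp x - 1 := by linarith
  have hY : expY x ≤ (1 + x) / exp x := by
    rw [expY, div_le_div_iff₀ hE1 (exp_pos x)]
    nlinarith
  have hZ : expZ x ≤ 1 + x := by
    rw [expZ, div_le_iff₀ hE1]
    nlinarith
  have hY0 : 0 ≤ expY x := (div_pos hx hE1).le
  have hZ0 : 0 ≤ expZ x := (div_pos (mul_pos hx (exp_pos x)) hE1).le
  rw [abs_of_nonneg (by positivity)]
  calc expY x ^ a * expZ x ^ b ≤ ((1 + x) / exp x) ^ a * (1 + x) ^ b := by gcongr
    _ = (1 + x) ^ (a + b) / exp x ^ a := by rw [div_pow, pow_add]; ring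
    _ ≤ (1 + (b : ℝ) / a) ^ b := by
        rw [div_le_iff₀ (by positivity)]
        exact one_add_pow_add_le_mul_exp_pow (by linarith) ha b

lemma hasDerivAt_expY {x : ℝ} (hx : x ≠ 0) :
    HasDerivAt expY ((expY x - expY x * expZ x) / x) x := by
  have hE : exp x - 1 ≠ 0 := by rw [sub_ne_zero, Ne, exp_eq_one_iff]; exact hx
  refine ((hasDerivAt_id x).div ((hasDerivAt_exp x).sub_const 1) hE).congr_deriv ?_
  simp only [expY, expZ, id]
  field_simp

lemma hasDerivAt_expZ {x : ℝ} (hx : x ≠ 0) :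
    HasDerivAt expZ ((expZ x - expY x * expZ x) / x) x := by
  have hE : exp x - 1 ≠ 0 := by rw [sub_ne_zero, Ne, exp_eq_one_iff]; exact hx
  refine (((hasDerivAt_id x).mul (hasDerivAt_exp x)).div
    ((hasDerivAt_exp x).sub_const 1) hE).congr_deriv ?_
  simp only [expY, expZ, Pi.mul_apply, id]
  field_simp
  ring

lemma HasDerivAt.comp_div_sq {g : ℝ → ℝ} {u c k : ℝ} (hc : c ≠ 0) (hk : k ≠ 0)
    (hg : HasDerivAt g (u / (c / k ^ 2)) (c / k ^ 2)) :
    HasDerivAt (fun s => g (c / s ^ 2)) (-2 * u / k) k := by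
  refine (hg.comp k ((hasDerivAt_const k c).fun_div (hasDerivAt_pow 2 k)
    (pow_ne_zero 2 hk))).congr_deriv ?_
  field_simp
  ring

theorem stmt_4_general (d : ℕ) (n : ℕ) :
    ∃ R : ℝ, 0 ≤ R ∧
      R = (∑ a ∈ Finset.Icc 1 (n + 1), ∑ b ∈ Finset.Icc 0 (n + 1 - a),
            |betaC n (a : ℤ) (b : ℤ)| * (1 + (b : ℝ) / (a : ℝ)) ^ b) ∧
      ∀ k : ℝ, 0 < k → ∀ q : EuclideanSpace ℝ (Fin d),
        |iteratedDeriv n (fun s => rbar d q s) k| ≤ R * k ^ ((2 : ℤ) - (n : ℤ)) := by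
  refine ⟨betaBound n, betaBound_nonneg n, rfl, fun k hk q => ?_⟩
  by_cases hq : q = 0
  · refine abs_iteratedDeriv_le_betaBound (Y := fun _ => 1) (Z := fun _ => 1)
      (fun s _ => by simp [rbar, hq]) (fun s _ => (hasDerivAt_const s 1).congr_deriv (by ring))
      (fun s _ => (hasDerivAt_const s 1).congr_deriv (by ring)) (fun _ _ a b _ => ?_) n hk
    simpa using one_le_pow₀ (le_add_of_nonneg_right (by positivity))
  · have hc : 0 < ‖q‖ ^ 2 := by positivity
    refine abs_iteratedDeriv_le_betaBound (Y := fun s => expY (‖q‖ ^ 2 / s ^ 2))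
      (Z := fun s => expZ (‖q‖ ^ 2 / s ^ 2)) (fun s hs => ?_)
      (fun s hs => ((hasDerivAt_expY (by positivity)).comp_div_sq hc.ne' hs.ne').congr_deriv
        (by ring))
      (fun s hs => ((hasDerivAt_expZ (by positivity)).comp_div_sq hc.ne' hs.ne').congr_deriv
        (by ring))
      (fun s hs a b ha => abs_expY_pow_mul_expZ_pow_le (by positivity) ha b) n hk
    rw [rbar, if_neg hq, expY]
    field_simp

theorem stmt_4 (d : ℕ) (hd : 1 ≤ d) (n : ℕ) :
    ∃ R : ℝ, 0 ≤ R ∧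
      R = (∑ a ∈ Finset.Icc 1 (n + 1), ∑ b ∈ Finset.Icc 0 (n + 1 - a),
            |betaC n (a : ℤ) (b : ℤ)| * (1 + (b : ℝ) / (a : ℝ)) ^ b) ∧
      ∀ k : ℝ, 0 < k → ∀ q : EuclideanSpace ℝ (Fin d),
        |iteratedDeriv n (fun s => rbar d q s) k| ≤ R * k ^ ((2 : ℤ) - (n : ℤ)) :=
  stmt_4_general d n
end

section
/- Let d ≥ 1, m ≠ 0, λ ≥ 0. For every l ∈ ℕ₀ there exists a constant A ≥ 0 such that for all k > 0: sup_{p ∈ ℝ^d} ∫_{ℝ^d} |∂_k^l κ₄(p,q,−q;k)| dq ≤ A · |m|³ · k / (k^l + |m|^l). -/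
/-!
As a function of `k`, `κ₄(p,q,-q;k) = C exp(-B/k)` with `C = λ|m|^{4-d}` and
`B = (2‖p‖^d + 2‖q‖^d + |m|^d)/|m|^{d-1} ≥ |m| + 2‖q‖^d/|m|^{d-1}`. By induction, the `l`-th
derivative of `exp(-B/k)` is `P_l(B/k) k^{-l} exp(-B/k)` for a polynomial `P_l` independent of `B`,
and `u^j e^{-u} ≤ 2^j j! e^{-u/2}` bounds it by `D k^{-l} e^{-|m|/2k} e^{-‖q‖^d/(k|m|^{d-1})}`.
Scaling shows that the last factor has integral `k|m|^{d-1} ∫ exp(-‖u‖^d)` over `q`, and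
`e^{-|m|/2k} (k^l + |m|^l) ≤ (1 + 2^l l!) k^l`.
-/

open MeasureTheory Module Polynomial Filter Topology
open scoped Nat

/-- The four-point function ansatz
`κ₄(p,q,r;k) = λ|m|^{4−d} exp[−(‖p‖^d + ‖q‖^d + ‖r‖^d + ‖p+q+r‖^d + |m|^d)/(k|m|^{d−1})]`. -/
noncomputable def kappa4 (d : ℕ) (m lam : ℝ) (p q r : EuclideanSpace ℝ (Fin d)) (k : ℝ) : ℝ :=
  lam * |m| ^ ((4 : ℤ) - (d : ℤ)) *
    Real.exp (-((‖p‖ ^ d + ‖q‖ ^ d + ‖r‖ ^ d + ‖p + q + r‖ ^ d + |m| ^ d)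
      / (k * |m| ^ ((d : ℤ) - 1))))

theorem hasDerivAt_inv_pow (n : ℕ) {x : ℝ} (hx : x ≠ 0) :
    HasDerivAt (fun s : ℝ => (s ^ n)⁻¹) (-(n / x ^ (n + 1))) x := by
  refine ((hasDerivAt_pow n x).inv (pow_ne_zero n hx)).congr_deriv ?_
  rcases n with _ | n
  · simp
  · rw [Nat.add_sub_cancel]
    field_simp
    ring

theorem exists_iteratedDeriv_exp_neg_div_eq (l : ℕ) :
    ∃ P : ℝ[X], ∀ B k : ℝ, 0 < k →
      iteratedDeriv l (fun s => Real.exp (-(B / s))) k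
        = P.eval (B / k) * (k ^ l)⁻¹ * Real.exp (-(B / k)) := by
  induction l with
  | zero => exact ⟨1, fun B k _ => by simp⟩
  | succ l ih =>
    obtain ⟨P, hP⟩ := ih
    refine ⟨(X - C (l : ℝ)) * P - X * derivative P, fun B k hk => ?_⟩
    have hev : iteratedDeriv l (fun s => Real.exp (-(B / s))) =ᶠ[𝓝 k]
        fun s => P.eval (B / s) * (s ^ l)⁻¹ * Real.exp (-(B / s)) :=
      eventually_of_mem (Ioi_mem_nhds hk) fun s hs => hP B s hs
    have hu : HasDerivAt (fun s => B / s) (-(B / k ^ 2)) k := by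
      simpa [div_eq_mul_inv] using (hasDerivAt_inv hk.ne').const_mul B
    rw [iteratedDeriv_succ, hev.deriv_eq]
    refine (((((P.hasDerivAt _).comp k hu).fun_mul (hasDerivAt_inv_pow l hk.ne')).fun_mul
      hu.fun_neg.exp).congr_deriv ?_).deriv
    simp only [Function.comp_apply, eval_sub, eval_mul, eval_X, eval_C]
    field_simp
    ring

theorem pow_mul_exp_neg_le_factorial {x : ℝ} (hx : 0 ≤ x) (n : ℕ) :
    x ^ n * Real.exp (-x) ≤ n ! := by
  have h := Real.pow_div_factorial_le_exp x hx n
  rw [div_le_iff₀ (by positivity)] at h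
  calc x ^ n * Real.exp (-x) ≤ Real.exp x * n ! * Real.exp (-x) := by gcongr
    _ = n ! := by rw [mul_right_comm, ← Real.exp_add, add_neg_cancel, Real.exp_zero, one_mul]

theorem pow_mul_exp_neg_le {u : ℝ} (hu : 0 ≤ u) (n : ℕ) :
    u ^ n * Real.exp (-u) ≤ 2 ^ n * n ! * Real.exp (-(u / 2)) := by
  have hsplit : Real.exp (-u) = Real.exp (-(u / 2)) * Real.exp (-(u / 2)) := by
    rw [← Real.exp_add]; ring_nf
  calc u ^ n * Real.exp (-u)
      = 2 ^ n * ((u / 2) ^ n * Real.exp (-(u / 2))) * Real.exp (-(u / 2)) := by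
        rw [hsplit, div_pow]; field_simp
    _ ≤ 2 ^ n * n ! * Real.exp (-(u / 2)) := by
        gcongr; exact pow_mul_exp_neg_le_factorial (by positivity) n

theorem Polynomial.abs_eval_mul_exp_neg_le (P : ℝ[X]) {u : ℝ} (hu : 0 ≤ u) :
    |P.eval u| * Real.exp (-u)
      ≤ (∑ i ∈ Finset.range (P.natDegree + 1), |P.coeff i| * 2 ^ i * i !) * Real.exp (-(u / 2)) := by
  rw [eval_eq_sum_range, Finset.sum_mul]
  refine (mul_le_mul_of_nonneg_right (Finset.abs_sum_le_sum_abs _ _) (Real.exp_pos _).le).trans ?_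
  rw [Finset.sum_mul]
  refine Finset.sum_le_sum fun i _ => ?_
  rw [abs_mul, abs_of_nonneg (pow_nonneg hu i), mul_assoc, mul_assoc, mul_assoc]
  exact mul_le_mul_of_nonneg_left (by simpa only [mul_assoc] using pow_mul_exp_neg_le hu i)
    (abs_nonneg _)

theorem exists_abs_iteratedDeriv_exp_neg_div_le (l : ℕ) :
    ∃ D : ℝ, 0 ≤ D ∧ ∀ B k : ℝ, 0 ≤ B → 0 < k →
      |iteratedDeriv l (fun s => Real.exp (-(B / s))) k|
        ≤ D * (k ^ l)⁻¹ * Real.exp (-(B / (2 * k))) := by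
  obtain ⟨P, hP⟩ := exists_iteratedDeriv_exp_neg_div_eq l
  refine ⟨∑ i ∈ Finset.range (P.natDegree + 1), |P.coeff i| * 2 ^ i * i !,
    Finset.sum_nonneg fun i _ => by positivity, fun B k hB hk => ?_⟩
  rw [hP B k hk, abs_mul, abs_mul, Real.abs_exp, abs_inv, abs_of_pos (pow_pos hk l),
    mul_right_comm, mul_right_comm _ (k ^ l)⁻¹, mul_comm 2 k, ← div_div]
  exact mul_le_mul_of_nonneg_right (P.abs_eval_mul_exp_neg_le (by positivity)) (by positivity)

section HaarScaling

variable {E : Type*} [NormedAddCommGroup E] [NormedSpace ℝ E]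

theorem norm_rpow_inv_smul_pow {n : ℕ} (hn : n ≠ 0) {a : ℝ} (ha : 0 ≤ a) (x : E) :
    ‖a ^ (n : ℝ)⁻¹ • x‖ ^ n = a * ‖x‖ ^ n := by
  rw [norm_smul, mul_pow, Real.norm_eq_abs, abs_of_nonneg (by positivity), ← Real.rpow_natCast,
    ← Real.rpow_mul ha, inv_mul_cancel₀ (by exact_mod_cast hn), Real.rpow_one]

variable [FiniteDimensional ℝ E] [MeasurableSpace E] [BorelSpace E]
  (μ : Measure E) [μ.IsAddHaarMeasure]

/-- A non-integrable function has integral `0`, which would make the unit ball null in the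
formula `μ (ball 0 1) = (∫ exp (-‖x‖ ^ p)) / Γ (dim E / p + 1)`. -/
theorem integrable_exp_neg_norm_rpow {p : ℝ} (hp : 0 < p) :
    Integrable (fun x : E => Real.exp (-‖x‖ ^ p)) μ := by
  by_contra h
  have hball := measure_unitBall_eq_integral_div_gamma μ hp
  rw [integral_undef h, zero_div, ENNReal.ofReal_zero] at hball
  exact (Metric.measure_ball_pos μ (0 : E) one_pos).ne' hball

theorem integrable_exp_neg_norm_pow_div (hE : finrank ℝ E ≠ 0) {a : ℝ} (ha : 0 < a) :
    Integrable (fun x : E => Real.exp (-(‖x‖ ^ finrank ℝ E / a))) μ := by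
  have hint := (integrable_exp_neg_norm_rpow μ (p := finrank ℝ E) (by positivity)).comp_smul
    (Real.rpow_pos_of_pos (inv_pos.mpr ha) (finrank ℝ E : ℝ)⁻¹).ne'
  refine hint.congr (ae_of_all _ fun x => ?_)
  simp only [Real.rpow_natCast, norm_rpow_inv_smul_pow hE (inv_pos.mpr ha).le, inv_mul_eq_div]

theorem integral_exp_neg_norm_pow_div (hE : finrank ℝ E ≠ 0) {a : ℝ} (ha : 0 < a) :
    ∫ x, Real.exp (-(‖x‖ ^ finrank ℝ E / a)) ∂μ = a * ∫ x, Real.exp (-‖x‖ ^ finrank ℝ E) ∂μ := by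
  have h := μ.integral_comp_smul (fun x => Real.exp (-(‖x‖ ^ finrank ℝ E / a)))
    (a ^ (finrank ℝ E : ℝ)⁻¹)
  simp only [norm_rpow_inv_smul_pow hE ha.le, mul_div_cancel_left₀ _ ha.ne'] at h
  rw [h, ← Real.rpow_natCast, ← Real.rpow_mul ha.le, inv_mul_cancel₀ (by exact_mod_cast hE),
    Real.rpow_one, abs_of_pos (inv_pos.mpr ha), smul_eq_mul, mul_inv_cancel_left₀ ha.ne']

end HaarScaling

theorem exp_neg_div_mul_pow_add_pow_le {x k : ℝ} (hx : 0 ≤ x) (hk : 0 < k) (l : ℕ) :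
    Real.exp (-(x / (2 * k))) * (k ^ l + x ^ l) ≤ (1 + 2 ^ l * l !) * k ^ l := by
  have hexp : Real.exp (-(x / (2 * k))) ≤ 1 := Real.exp_le_one_iff.mpr (by simp; positivity)
  have hpow : Real.exp (-(x / (2 * k))) * x ^ l ≤ 2 ^ l * l ! * k ^ l :=
    calc Real.exp (-(x / (2 * k))) * x ^ l
        = (2 * k) ^ l * ((x / (2 * k)) ^ l * Real.exp (-(x / (2 * k)))) := by
          rw [div_pow]; field_simp
      _ ≤ (2 * k) ^ l * l ! := by
          gcongr; exact pow_mul_exp_neg_le_factorial (by positivity) l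
      _ = 2 ^ l * l ! * k ^ l := by ring
  nlinarith [pow_pos hk l]

theorem kappa4_self_neg (d : ℕ) (m lam : ℝ) (p q : EuclideanSpace ℝ (Fin d)) :
    (fun s => kappa4 d m lam p q (-q) s) = fun s => lam * |m| ^ ((4 : ℤ) - d) *
      Real.exp (-((2 * ‖p‖ ^ d + 2 * ‖q‖ ^ d + |m| ^ d) / |m| ^ ((d : ℤ) - 1) / s)) := by
  funext s
  rw [kappa4, norm_neg, add_neg_cancel_right, div_div, mul_comm s]
  ring_nf

theorem abs_iteratedDeriv_kappa4_self_neg_le {d l : ℕ} {m lam D k : ℝ} (hm : m ≠ 0)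
    (hlam : 0 ≤ lam) (hD0 : 0 ≤ D) (hk : 0 < k)
    (hD : ∀ B k : ℝ, 0 ≤ B → 0 < k → |iteratedDeriv l (fun s => Real.exp (-(B / s))) k|
      ≤ D * (k ^ l)⁻¹ * Real.exp (-(B / (2 * k))))
    (p q : EuclideanSpace ℝ (Fin d)) :
    |iteratedDeriv l (fun s => kappa4 d m lam p q (-q) s) k|
      ≤ lam * |m| ^ ((4 : ℤ) - d) * D * (k ^ l)⁻¹ * Real.exp (-(|m| / (2 * k)))
        * Real.exp (-(‖q‖ ^ d / (k * |m| ^ ((d : ℤ) - 1)))) := by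
  have hm' : 0 < |m| := abs_pos.mpr hm
  have hM : 0 < |m| ^ ((d : ℤ) - 1) := zpow_pos hm' _
  set B := (2 * ‖p‖ ^ d + 2 * ‖q‖ ^ d + |m| ^ d) / |m| ^ ((d : ℤ) - 1) with hBdef
  have hB : |m| / (2 * k) + ‖q‖ ^ d / (k * |m| ^ ((d : ℤ) - 1)) ≤ B / (2 * k) := by
    have hmd : |m| ^ d = |m| * |m| ^ ((d : ℤ) - 1) := by
      rw [← zpow_natCast, ← zpow_one_add₀ hm'.ne', add_sub_cancel]
    rw [hBdef, hmd]
    field_simp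
    nlinarith [pow_nonneg (norm_nonneg p) d]
  rw [kappa4_self_neg, iteratedDeriv_const_mul_field, abs_mul,
    abs_of_nonneg (by positivity : 0 ≤ lam * |m| ^ ((4 : ℤ) - d))]
  calc _ ≤ lam * |m| ^ ((4 : ℤ) - d) * (D * (k ^ l)⁻¹ * Real.exp (-(B / (2 * k)))) := by
        gcongr; exact hD B k (by positivity) hk
    _ ≤ _ := by
        rw [mul_assoc _ (Real.exp _), ← Real.exp_add, ← mul_assoc, ← mul_assoc]
        gcongr
        linarith

theorem integral_abs_iteratedDeriv_kappa4_self_neg_le {d l : ℕ} (hd : d ≠ 0) {m lam D k : ℝ}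
    (hm : m ≠ 0) (hlam : 0 ≤ lam) (hD0 : 0 ≤ D) (hk : 0 < k)
    (hD : ∀ B k : ℝ, 0 ≤ B → 0 < k → |iteratedDeriv l (fun s => Real.exp (-(B / s))) k|
      ≤ D * (k ^ l)⁻¹ * Real.exp (-(B / (2 * k))))
    (p : EuclideanSpace ℝ (Fin d)) :
    ∫ q, |iteratedDeriv l (fun s => kappa4 d m lam p q (-q) s) k|
      ≤ lam * D * (∫ u : EuclideanSpace ℝ (Fin d), Real.exp (-‖u‖ ^ d)) * |m| ^ 3 * k
        * ((k ^ l)⁻¹ * Real.exp (-(|m| / (2 * k)))) := by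
  have hm' : 0 < |m| := abs_pos.mpr hm
  have ha : 0 < k * |m| ^ ((d : ℤ) - 1) := mul_pos hk (zpow_pos hm' _)
  have hdim : finrank ℝ (EuclideanSpace ℝ (Fin d)) ≠ 0 := by simpa using hd
  have hint := integrable_exp_neg_norm_pow_div volume hdim ha
  have hval := integral_exp_neg_norm_pow_div volume hdim ha
  rw [finrank_euclideanSpace_fin] at hint hval
  have hm3 : |m| ^ ((4 : ℤ) - d) * |m| ^ ((d : ℤ) - 1) = |m| ^ 3 := by
    rw [← zpow_add₀ hm'.ne']; norm_num
  calc ∫ q, |iteratedDeriv l (fun s => kappa4 d m lam p q (-q) s) k|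
      ≤ ∫ q : EuclideanSpace ℝ (Fin d), lam * |m| ^ ((4 : ℤ) - d) * D * (k ^ l)⁻¹
          * Real.exp (-(|m| / (2 * k))) * Real.exp (-(‖q‖ ^ d / (k * |m| ^ ((d : ℤ) - 1)))) :=
        integral_mono_of_nonneg (ae_of_all _ fun _ => abs_nonneg _) (hint.const_mul _)
          (ae_of_all _ (abs_iteratedDeriv_kappa4_self_neg_le hm hlam hD0 hk hD p))
    _ = _ := by
        rw [integral_const_mul, hval, ← hm3]
        ring

theorem stmt_11 (d : ℕ) (hd : 1 ≤ d) (m lam : ℝ) (hm : m ≠ 0) (hlam : 0 ≤ lam) (l : ℕ) :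
    ∃ A : ℝ, 0 ≤ A ∧ ∀ k : ℝ, 0 < k → ∀ p : EuclideanSpace ℝ (Fin d),
      (∫ q, |iteratedDeriv l (fun s => kappa4 d m lam p q (-q) s) k|)
        ≤ A * |m| ^ 3 * k / (k ^ l + |m| ^ l) := by
  obtain ⟨D, hD0, hD⟩ := exists_abs_iteratedDeriv_exp_neg_div_le l
  set I := ∫ u : EuclideanSpace ℝ (Fin d), Real.exp (-‖u‖ ^ d)
  have hI : 0 ≤ I := integral_nonneg fun _ => (Real.exp_pos _).le
  refine ⟨lam * D * I * (1 + 2 ^ l * l !), by positivity, fun k hk p => ?_⟩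
  refine (integral_abs_iteratedDeriv_kappa4_self_neg_le (by omega) hm hlam hD0 hk hD p).trans ?_
  rw [le_div_iff₀ (by positivity)]
  calc lam * D * I * |m| ^ 3 * k * ((k ^ l)⁻¹ * Real.exp (-(|m| / (2 * k)))) * (k ^ l + |m| ^ l)
      = lam * D * I * |m| ^ 3 * k * (k ^ l)⁻¹
          * (Real.exp (-(|m| / (2 * k))) * (k ^ l + |m| ^ l)) := by ring
    _ ≤ lam * D * I * |m| ^ 3 * k * (k ^ l)⁻¹ * ((1 + 2 ^ l * l !) * k ^ l) := by
        gcongr ?_ * ?_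
        exact exp_neg_div_mul_pow_add_pow_le (abs_nonneg m) hk l
    _ = lam * D * I * (1 + 2 ^ l * l !) * |m| ^ 3 * k := by
        field_simp
end

section
/- For every l ∈ ℕ₀ there exists a constant R̄_l ≥ 0 such that for all k > 0: ∫_{ℝ^d} |∂_k^l r̄(q;k)| dq ≤ R̄_l · k^{2+d−l}. In particular one may take R̄_l = s_{d−1} Σ_{a=1}^{l+1} Σ_{b=0}^{l+1−a} |β^l_{a,b}| ∫_0^∞ t^{2a+2b+d−1} e^{b t²} / (e^{t²} − 1)^{a+b} dt, where these integrals are finite and the β^l_{a,b} are defined by β⁰_{1,0} = 1, β⁰_{a,b} = 0 otherwise, and β^{l+1}_{a,b} = (2 − l − 2a − 2b) β^l_{a,b} + 2a β^l_{a,b−1} + 2b β^l_{a−1,b}. -/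
open MeasureTheory

/-- The surface area `s_{d−1} = 2π^{d/2}/Γ(d/2)` of the unit `(d−1)`-sphere. -/
noncomputable def sSphere (d : ℕ) : ℝ :=
  2 * Real.pi ^ ((d : ℝ) / 2) / Real.Gamma ((d : ℝ) / 2)

lemma beta_eq_zero (l : ℕ) : ∀ (a b : ℤ), (a < 1 ∨ b < 0 ∨ (l : ℤ) + 1 < a + b) →
    betaC l a b = 0 := by
  induction l with
  | zero =>
    intro a b h
    simp only [betaC, ite_eq_right_iff, and_imp]
    intro ha hb; omega
  | succ l ih =>
    intro a b h
    simp only [betaC]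
    rcases h with h | h | h
    · rw [ih a b (by omega), ih a (b - 1) (by omega)]
      have : betaC l (a - 1) b = 0 := ih _ _ (by omega)
      rw [this]; ring
    · rw [ih a b (by omega), ih a (b - 1) (by omega), ih (a - 1) b (by omega)]; ring
    · rw [ih a b (by omega), ih a (b - 1) (by omega), ih (a - 1) b (by push_cast; omega)]; ring

noncomputable def Tm (x : ℝ) (l : ℕ) (a b : ℤ) (k : ℝ) : ℝ :=
  x ^ (a + b) * k ^ (2 - (l : ℤ) - 2 * a - 2 * b) * Real.exp ((b : ℝ) * (x / k ^ 2)) *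
    (Real.exp (x / k ^ 2) - 1) ^ (-(a + b))

lemma expu_sub_one_pos {x k : ℝ} (hx : 0 < x) (hk : 0 < k) :
    0 < Real.exp (x / k ^ 2) - 1 := by
  have : (0:ℝ) < x / k ^ 2 := by positivity
  linarith [Real.one_lt_exp_iff.mpr this]

lemma Tm_succ_l {x k : ℝ} (hx : 0 < x) (hk : 0 < k) (l : ℕ) (a b : ℤ) :
    Tm x (l + 1) a b k = Tm x l a b k / k := by
  have hk0 : k ≠ 0 := hk.ne'
  simp only [Tm]
  rw [show (2 - ((l + 1 : ℕ) : ℤ) - 2 * a - 2 * b) = (2 - (l : ℤ) - 2 * a - 2 * b) - 1 by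
    push_cast; ring, zpow_sub_one₀ hk0]
  ring

lemma Tm_succ_b {x k : ℝ} (hx : 0 < x) (hk : 0 < k) (l : ℕ) (a b : ℤ) :
    Tm x (l + 1) a (b + 1) k
      = Tm x l a b k * (x * Real.exp (x / k ^ 2)) / (k ^ 3 * (Real.exp (x / k ^ 2) - 1)) := by
  have hk0 : k ≠ 0 := hk.ne'
  have hx0 : x ≠ 0 := hx.ne'
  have hE : Real.exp (x / k ^ 2) - 1 ≠ 0 := (expu_sub_one_pos hx hk).ne'
  simp only [Tm]
  rw [show a + (b + 1) = (a + b) + 1 by ring, zpow_add_one₀ hx0,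
    show (2 - ((l + 1 : ℕ) : ℤ) - 2 * a - 2 * (b + 1)) = (2 - (l : ℤ) - 2 * a - 2 * b) - 3 by
      push_cast; ring,
    zpow_sub₀ hk0, show ((3 : ℤ) : ℤ) = ((3 : ℕ) : ℤ) by norm_num, zpow_natCast,
    show (((b + 1) : ℤ) : ℝ) * (x / k ^ 2) = (b : ℝ) * (x / k ^ 2) + x / k ^ 2 by push_cast; ring,
    Real.exp_add]
  rw [show -(a + b + 1) = -(a + b) - 1 by ring, zpow_sub_one₀ hE]
  field_simp

lemma Tm_succ_a {x k : ℝ} (hx : 0 < x) (hk : 0 < k) (l : ℕ) (a b : ℤ) :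
    Tm x (l + 1) (a + 1) b k
      = Tm x l a b k * x / (k ^ 3 * (Real.exp (x / k ^ 2) - 1)) := by
  have hk0 : k ≠ 0 := hk.ne'
  have hx0 : x ≠ 0 := hx.ne'
  have hE : Real.exp (x / k ^ 2) - 1 ≠ 0 := (expu_sub_one_pos hx hk).ne'
  simp only [Tm]
  rw [show (a + 1) + b = (a + b) + 1 by ring, zpow_add_one₀ hx0,
    show (2 - ((l + 1 : ℕ) : ℤ) - 2 * (a + 1) - 2 * b) = (2 - (l : ℤ) - 2 * a - 2 * b) - 3 by
      push_cast; ring,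
    zpow_sub₀ hk0, show ((3 : ℤ) : ℤ) = ((3 : ℕ) : ℤ) by norm_num, zpow_natCast,
    ]
  rw [show -(a + b + 1) = -(a + b) - 1 by ring, zpow_sub_one₀ hE]
  field_simp

lemma hasDerivAt_Tm {x k : ℝ} (hx : 0 < x) (hk : 0 < k) (l : ℕ) (a b : ℤ) :
    HasDerivAt (fun s => Tm x l a b s)
      ((2 - (l : ℝ) - 2 * a - 2 * b) * Tm x (l + 1) a b k
        + 2 * a * Tm x (l + 1) a (b + 1) k + 2 * b * Tm x (l + 1) (a + 1) b k) k := by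
  have hk0 : k ≠ 0 := hk.ne'
  have hx0 : x ≠ 0 := hx.ne'
  have hE0 : Real.exp (x / k ^ 2) - 1 ≠ 0 := (expu_sub_one_pos hx hk).ne'
  have hu : HasDerivAt (fun s : ℝ => x / s ^ 2)
      ((0 * k ^ 2 - x * (2 * k ^ 1)) / (k ^ 2) ^ 2) k := by
    simpa using (hasDerivAt_const k x).fun_div (hasDerivAt_pow 2 k) (pow_ne_zero 2 hk0)
  set u' : ℝ := (0 * k ^ 2 - x * (2 * k ^ 1)) / (k ^ 2) ^ 2 with hu'
  have hB : HasDerivAt (fun s : ℝ => Real.exp ((b : ℝ) * (x / s ^ 2)))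
      (Real.exp ((b : ℝ) * (x / k ^ 2)) * ((b : ℝ) * u')) k := (hu.const_mul (b : ℝ)).exp
  have hQ : HasDerivAt (fun s : ℝ => (Real.exp (x / s ^ 2) - 1) ^ (-(a + b)))
      ((↑(-(a + b)) * (Real.exp (x / k ^ 2) - 1) ^ (-(a + b) - 1))
        * (Real.exp (x / k ^ 2) * u')) k := by
    have h1 : HasDerivAt (fun s : ℝ => Real.exp (x / s ^ 2) - 1)
        (Real.exp (x / k ^ 2) * u') k := hu.exp.sub_const 1
    exact (hasDerivAt_zpow (-(a + b)) _ (Or.inl hE0)).comp k h1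
  have hK : HasDerivAt (fun s : ℝ => x ^ (a + b) * s ^ (2 - (l : ℤ) - 2 * a - 2 * b))
      (x ^ (a + b) * (↑(2 - (l : ℤ) - 2 * a - 2 * b) * k ^ (2 - (l : ℤ) - 2 * a - 2 * b - 1))) k :=
    (hasDerivAt_zpow _ k (Or.inl hk0)).const_mul _
  have hT := (hK.fun_mul hB).fun_mul hQ
  have heq : (fun s : ℝ => x ^ (a + b) * s ^ (2 - (l : ℤ) - 2 * a - 2 * b)
      * Real.exp ((b : ℝ) * (x / s ^ 2)) * (Real.exp (x / s ^ 2) - 1) ^ (-(a + b)))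
      = fun s => Tm x l a b s := by
    funext s; simp only [Tm]
  rw [heq] at hT
  refine HasDerivAt.congr_deriv hT ?_
  symm
  rw [Tm_succ_l hx hk, Tm_succ_b hx hk, Tm_succ_a hx hk]
  simp only [Tm, hu']
  rw [zpow_sub_one₀ hk0, zpow_sub_one₀ hE0]
  push_cast
  field_simp
  ring

noncomputable def Fsum (x : ℝ) (l : ℕ) (k : ℝ) : ℝ :=
  ∑ a ∈ Finset.Icc (-1 : ℤ) ((l : ℤ) + 2), ∑ b ∈ Finset.Icc (-1 : ℤ) ((l : ℤ) + 2),
    betaC l a b * Tm x l a b k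

lemma sum_ext (l : ℕ) (f : ℤ → ℤ → ℝ) :
    ∑ a ∈ Finset.Icc (-1 : ℤ) ((l : ℤ) + 2), ∑ b ∈ Finset.Icc (-1 : ℤ) ((l : ℤ) + 2),
      betaC l a b * f a b
    = ∑ a ∈ Finset.Icc (-1 : ℤ) ((l : ℤ) + 3), ∑ b ∈ Finset.Icc (-1 : ℤ) ((l : ℤ) + 3),
      betaC l a b * f a b := by
  rw [Finset.sum_subset (Finset.Icc_subset_Icc_right (by omega : ((l:ℤ)+2) ≤ (l:ℤ)+3))]
  · apply Finset.sum_congr rfl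
    intro a ha
    rw [Finset.sum_subset (Finset.Icc_subset_Icc_right (by omega : ((l:ℤ)+2) ≤ (l:ℤ)+3))]
    intro b hb hnb
    simp only [Finset.mem_Icc] at hb hnb
    rw [beta_eq_zero l a b (by omega)]; ring
  · intro a ha hna
    simp only [Finset.mem_Icc] at ha hna
    apply Finset.sum_eq_zero
    intro b hb
    simp only [Finset.mem_Icc] at hb
    rw [beta_eq_zero l a b (by omega)]; ring

lemma icc_map (n : ℤ) : Finset.Icc (-1 : ℤ) (n + 1)
    = (Finset.Icc (-2 : ℤ) n).map (addRightEmbedding 1) := by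
  rw [Finset.map_add_right_Icc]
  norm_num

lemma sum_shift (n : ℤ) (f g : ℤ → ℝ) (h0 : ∀ b, b < 0 → g b = 0) :
    ∑ b ∈ Finset.Icc (-1 : ℤ) n, g b * f (b + 1)
    = ∑ b ∈ Finset.Icc (-1 : ℤ) (n + 1), g (b - 1) * f b := by
  rw [icc_map, Finset.sum_map]
  simp only [addRightEmbedding_apply, add_sub_cancel_right]
  rw [← Finset.sum_subset (Finset.Icc_subset_Icc_left (by omega : (-2 : ℤ) ≤ -1))]
  intro b hb hnb
  simp only [Finset.mem_Icc] at hb hnb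
  rw [h0 b (by omega)]; ring

lemma Fsum_succ_eq (x k : ℝ) (l : ℕ) :
    ∑ a ∈ Finset.Icc (-1 : ℤ) ((l : ℤ) + 2), ∑ b ∈ Finset.Icc (-1 : ℤ) ((l : ℤ) + 2),
      betaC l a b * ((2 - (l : ℝ) - 2 * a - 2 * b) * Tm x (l + 1) a b k
        + 2 * a * Tm x (l + 1) a (b + 1) k + 2 * b * Tm x (l + 1) (a + 1) b k)
    = Fsum x (l + 1) k := by
  have hrange : ((l + 1 : ℕ) : ℤ) + 2 = ((l : ℤ) + 2) + 1 := by push_cast; ring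
  have hsplit : ∀ a b : ℤ, betaC l a b * ((2 - (l : ℝ) - 2 * a - 2 * b) * Tm x (l + 1) a b k
        + 2 * a * Tm x (l + 1) a (b + 1) k + 2 * b * Tm x (l + 1) (a + 1) b k)
      = betaC l a b * ((2 - (l : ℝ) - 2 * a - 2 * b) * Tm x (l + 1) a b k)
        + (betaC l a b * (2 * a)) * Tm x (l + 1) a (b + 1) k
        + (betaC l a b * (2 * b)) * Tm x (l + 1) (a + 1) b k := fun a b => by ring
  simp only [hsplit, Finset.sum_add_distrib]
  have hS1 : ∑ a ∈ Finset.Icc (-1 : ℤ) ((l : ℤ) + 2), ∑ b ∈ Finset.Icc (-1 : ℤ) ((l : ℤ) + 2),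
      betaC l a b * ((2 - (l : ℝ) - 2 * a - 2 * b) * Tm x (l + 1) a b k)
      = ∑ a ∈ Finset.Icc (-1 : ℤ) ((l : ℤ) + 2 + 1), ∑ b ∈ Finset.Icc (-1 : ℤ) ((l : ℤ) + 2 + 1),
      betaC l a b * ((2 - (l : ℝ) - 2 * a - 2 * b) * Tm x (l + 1) a b k) := by
    have := sum_ext l (fun a b => (2 - (l : ℝ) - 2 * a - 2 * b) * Tm x (l + 1) a b k)
    simpa only [show ((l : ℤ) + 3) = (l : ℤ) + 2 + 1 by ring] using this
  -- S2 : reindex inner index b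
  have hS2 : ∑ a ∈ Finset.Icc (-1 : ℤ) ((l : ℤ) + 2), ∑ b ∈ Finset.Icc (-1 : ℤ) ((l : ℤ) + 2),
      (betaC l a b * (2 * a)) * Tm x (l + 1) a (b + 1) k
      = ∑ a ∈ Finset.Icc (-1 : ℤ) ((l : ℤ) + 2 + 1), ∑ b ∈ Finset.Icc (-1 : ℤ) ((l : ℤ) + 2 + 1),
      (betaC l a (b - 1) * (2 * a)) * Tm x (l + 1) a b k := by
    have hin : ∀ a : ℤ, ∑ b ∈ Finset.Icc (-1 : ℤ) ((l : ℤ) + 2),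
        (betaC l a b * (2 * a)) * Tm x (l + 1) a (b + 1) k
        = ∑ b ∈ Finset.Icc (-1 : ℤ) ((l : ℤ) + 2 + 1),
        (betaC l a (b - 1) * (2 * a)) * Tm x (l + 1) a b k := by
      intro a
      exact sum_shift ((l : ℤ) + 2) (fun b => Tm x (l + 1) a b k)
        (fun b => betaC l a b * (2 * a))
        (fun b hb => by simp [beta_eq_zero l a b (by omega)])
    simp only [hin]
    rw [Finset.sum_subset (Finset.Icc_subset_Icc_right (by omega : ((l:ℤ)+2) ≤ (l:ℤ)+2+1))]
    intro a ha hna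
    simp only [Finset.mem_Icc] at ha hna
    apply Finset.sum_eq_zero
    intro b hb
    simp only [Finset.mem_Icc] at hb
    rw [beta_eq_zero l a (b - 1) (by omega)]; ring
  -- S3 : reindex outer index a, via sum_comm
  have hS3 : ∑ a ∈ Finset.Icc (-1 : ℤ) ((l : ℤ) + 2), ∑ b ∈ Finset.Icc (-1 : ℤ) ((l : ℤ) + 2),
      (betaC l a b * (2 * b)) * Tm x (l + 1) (a + 1) b k
      = ∑ a ∈ Finset.Icc (-1 : ℤ) ((l : ℤ) + 2 + 1), ∑ b ∈ Finset.Icc (-1 : ℤ) ((l : ℤ) + 2 + 1),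
      (betaC l (a - 1) b * (2 * b)) * Tm x (l + 1) a b k := by
    rw [Finset.sum_comm]
    conv_rhs => rw [Finset.sum_comm]
    have hin : ∀ b : ℤ, ∑ a ∈ Finset.Icc (-1 : ℤ) ((l : ℤ) + 2),
        (betaC l a b * (2 * b)) * Tm x (l + 1) (a + 1) b k
        = ∑ a ∈ Finset.Icc (-1 : ℤ) ((l : ℤ) + 2 + 1),
        (betaC l (a - 1) b * (2 * b)) * Tm x (l + 1) a b k := by
      intro b
      exact sum_shift ((l : ℤ) + 2) (fun a => Tm x (l + 1) a b k)
        (fun a => betaC l a b * (2 * b))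
        (fun a ha => by simp [beta_eq_zero l a b (by omega)])
    simp only [hin]
    rw [Finset.sum_subset (Finset.Icc_subset_Icc_right (by omega : ((l:ℤ)+2) ≤ (l:ℤ)+2+1))]
    intro b hb hnb
    simp only [Finset.mem_Icc] at hb hnb
    apply Finset.sum_eq_zero
    intro a ha
    simp only [Finset.mem_Icc] at ha
    rw [beta_eq_zero l (a - 1) b (by omega)]; ring
  rw [hS1, hS2, hS3, Fsum, hrange]
  simp only [← Finset.sum_add_distrib]
  apply Finset.sum_congr rfl
  intro a _
  apply Finset.sum_congr rfl
  intro b _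
  show _ = betaC (l + 1) a b * Tm x (l + 1) a b k
  simp only [betaC]
  ring

lemma Fsum_zero (x k : ℝ) : Fsum x 0 k = x / (Real.exp (x / k ^ 2) - 1) := by
  unfold Fsum
  rw [Finset.sum_eq_single 1]
  · rw [Finset.sum_eq_single 0]
    · have h1 : betaC 0 1 0 = 1 := by simp [betaC]
      have h2 : Tm x 0 1 0 k = x / (Real.exp (x / k ^ 2) - 1) := by
        simp [Tm, zpow_neg, div_eq_mul_inv]
      rw [h1, h2, one_mul]
    · intro b hb hnb
      simp only [Finset.mem_Icc] at hb
      rw [beta_eq_zero 0 1 b (by omega)]; ring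
    · intro h
      simp only [Finset.mem_Icc] at h
      omega
  · intro a ha hna
    simp only [Finset.mem_Icc] at ha
    apply Finset.sum_eq_zero
    intro b hb
    simp only [Finset.mem_Icc] at hb
    rw [beta_eq_zero 0 a b (by omega)]; ring
  · intro h
    simp only [Finset.mem_Icc] at h
    omega

lemma iteratedDeriv_Fsum {x : ℝ} (hx : 0 < x) (l : ℕ) :
    ∀ k : ℝ, 0 < k →
      iteratedDeriv l (fun s : ℝ => x / (Real.exp (x / s ^ 2) - 1)) k = Fsum x l k := by
  induction l with
  | zero =>
    intro k hk
    rw [iteratedDeriv_zero, Fsum_zero]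
  | succ l ih =>
    intro k hk
    rw [iteratedDeriv_succ]
    have hev : iteratedDeriv l (fun s : ℝ => x / (Real.exp (x / s ^ 2) - 1))
        =ᶠ[nhds k] fun s => Fsum x l s :=
      Filter.eventuallyEq_of_mem (Ioi_mem_nhds hk) (fun t ht => ih t ht)
    rw [hev.deriv_eq]
    have hD : HasDerivAt (fun s => Fsum x l s)
        (∑ a ∈ Finset.Icc (-1 : ℤ) ((l : ℤ) + 2), ∑ b ∈ Finset.Icc (-1 : ℤ) ((l : ℤ) + 2),
          betaC l a b * ((2 - (l : ℝ) - 2 * a - 2 * b) * Tm x (l + 1) a b k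
            + 2 * a * Tm x (l + 1) a (b + 1) k + 2 * b * Tm x (l + 1) (a + 1) b k)) k := by
      apply HasDerivAt.fun_sum
      intro a _
      apply HasDerivAt.fun_sum
      intro b _
      exact (hasDerivAt_Tm hx hk l a b).const_mul (betaC l a b)
    rw [hD.deriv, Fsum_succ_eq]

lemma sum_int_nat (m n : ℕ) (f : ℤ → ℝ) :
    ∑ a ∈ Finset.Icc (m : ℤ) (n : ℤ), f a = ∑ a ∈ Finset.Icc m n, f (a : ℤ) := by
  refine Finset.sum_nbij' (i := fun (a : ℤ) => a.toNat) (j := fun (a : ℕ) => (a : ℤ))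
    ?_ ?_ ?_ ?_ ?_
  · intro a ha; simp only [Finset.mem_Icc] at *; omega
  · intro a ha; simp only [Finset.mem_Icc] at *; omega
  · intro a ha; simp only [Finset.mem_Icc] at ha; simp; omega
  · intro a ha; simp
  · intro a ha; simp only [Finset.mem_Icc] at ha
    rw [Int.toNat_of_nonneg (by omega)]

lemma Fsum_eq_nat (x k : ℝ) (l : ℕ) :
    Fsum x l k = ∑ a ∈ Finset.Icc 1 (l + 1), ∑ b ∈ Finset.Icc 0 (l + 1 - a),
      betaC l (a : ℤ) (b : ℤ) * Tm x l (a : ℤ) (b : ℤ) k := by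
  unfold Fsum
  have step1 : ∑ a ∈ Finset.Icc (-1 : ℤ) ((l : ℤ) + 2), ∑ b ∈ Finset.Icc (-1 : ℤ) ((l : ℤ) + 2),
      betaC l a b * Tm x l a b k
      = ∑ a ∈ Finset.Icc (1 : ℤ) ((l : ℤ) + 1), ∑ b ∈ Finset.Icc (0 : ℤ) ((l : ℤ) + 1 - a),
      betaC l a b * Tm x l a b k := by
    rw [← Finset.sum_subset (Finset.Icc_subset_Icc (by omega) (by omega) :
        Finset.Icc (1 : ℤ) ((l : ℤ) + 1) ⊆ Finset.Icc (-1 : ℤ) ((l : ℤ) + 2))]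
    · apply Finset.sum_congr rfl
      intro a ha
      simp only [Finset.mem_Icc] at ha
      rw [← Finset.sum_subset (Finset.Icc_subset_Icc (by omega) (by omega) :
          Finset.Icc (0 : ℤ) ((l : ℤ) + 1 - a) ⊆ Finset.Icc (-1 : ℤ) ((l : ℤ) + 2))]
      intro b hb hnb
      simp only [Finset.mem_Icc] at hb hnb
      rw [beta_eq_zero l a b (by omega)]; ring
    · intro a ha hna
      simp only [Finset.mem_Icc] at ha hna
      apply Finset.sum_eq_zero
      intro b hb
      simp only [Finset.mem_Icc] at hb
      rw [beta_eq_zero l a b (by omega)]; ring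
  rw [step1]
  rw [show Finset.Icc (1 : ℤ) ((l : ℤ) + 1) = Finset.Icc ((1 : ℕ) : ℤ) (((l + 1 : ℕ)) : ℤ) by
    norm_cast, sum_int_nat]
  apply Finset.sum_congr rfl
  intro a ha
  simp only [Finset.mem_Icc] at ha
  rw [show Finset.Icc (0 : ℤ) ((l : ℤ) + 1 - (a : ℕ))
      = Finset.Icc ((0 : ℕ) : ℤ) (((l + 1 - a : ℕ)) : ℤ) by
    rw [show ((l : ℤ) + 1 - (a : ℕ)) = (((l + 1 - a : ℕ)) : ℤ) by omega]; norm_cast,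
    sum_int_nat]

noncomputable def gdef (a b : ℕ) (t : ℝ) : ℝ :=
  (t ^ 2) ^ (a + b) * Real.exp (b * t ^ 2) / (Real.exp (t ^ 2) - 1) ^ (a + b)

lemma Tm_eq_g {k t : ℝ} (hk : 0 < k) (ht : 0 < t) (l : ℕ) (a b : ℕ) :
    Tm ((t * k) ^ 2) l (a : ℤ) (b : ℤ) k = k ^ ((2 : ℤ) - (l : ℤ)) * gdef a b t := by
  have hk0 : k ≠ 0 := hk.ne'
  have hu : (t * k) ^ 2 / k ^ 2 = t ^ 2 := by
    rw [mul_pow, mul_div_assoc, div_self (pow_ne_zero 2 hk0), mul_one]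
  unfold Tm gdef
  rw [hu]
  rw [show (a : ℤ) + (b : ℤ) = ((a + b : ℕ) : ℤ) by push_cast; ring,
    show (2 - (l : ℤ) - 2 * (a : ℕ) - 2 * (b : ℕ)) = (2 - (l : ℤ)) - ((2 * (a + b) : ℕ) : ℤ) by
      push_cast; ring,
    zpow_natCast, zpow_sub₀ hk0, zpow_natCast, zpow_neg, zpow_natCast]
  rw [mul_pow t k, mul_pow (t ^ 2) (k ^ 2), ← pow_mul k 2 (a + b)]
  have hQ0 : Real.exp (t ^ 2) - 1 ≠ 0 := by
    have h : (0:ℝ) < t ^ 2 := by positivity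
    have := Real.one_lt_exp_iff.mpr h
    linarith
  have h2 : k ^ (2 * (a + b)) ≠ 0 := pow_ne_zero _ hk0
  push_cast
  generalize hX : (t ^ 2) ^ (a + b) = X
  generalize hP : k ^ (2 * (a + b)) = P at h2
  generalize hQ : (Real.exp (t ^ 2) - 1) ^ (a + b) = Q
  have hQ' : Q ≠ 0 := hQ ▸ pow_ne_zero _ hQ0
  field_simp

lemma gdef_nonneg (a b : ℕ) (t : ℝ) : 0 ≤ gdef a b t := by
  unfold gdef
  have h : (0:ℝ) ≤ Real.exp (t ^ 2) - 1 := by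
    have := Real.add_one_le_exp (t ^ 2)
    nlinarith [sq_nonneg t]
  positivity

lemma key_ineq (a b : ℕ) (ha : 1 ≤ a) {t : ℝ} (ht : 0 ≤ t) :
    gdef a b t ≤ ((2:ℝ) ^ (a + b) + 4 ^ (a + b) * (Nat.factorial (a + b)))
      * Real.exp (-(t ^ 2) / 2) := by
  set m := a + b with hm
  set C : ℝ := (2:ℝ) ^ m + 4 ^ m * (Nat.factorial m) with hC
  have hC0 : 0 < C := by positivity
  by_cases htz : t = 0
  · subst htz
    simp only [gdef, ne_eq, OfNat.ofNat_ne_zero, not_false_eq_true, zero_pow, Real.exp_zero,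
      sub_self]
    rw [zero_pow (show a + b ≠ 0 by omega), zero_mul, zero_div]
    positivity
  · have hx : 0 < t ^ 2 := by positivity
    set x := t ^ 2 with hxdef
    have hE : x + 1 ≤ Real.exp x := Real.add_one_le_exp x
    have hD : 0 < Real.exp x - 1 := by linarith
    -- main chain
    have hA : x * Real.exp x ≤ (1 + x) * (Real.exp x - 1) := by nlinarith
    have hApow : (x * Real.exp x) ^ m ≤ ((1 + x) * (Real.exp x - 1)) ^ m :=
      pow_le_pow_left₀ (by positivity) hA m
    have hB : (1 + x) ^ m ≤ C * Real.exp (x / 2) := by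
      have hex : 1 ≤ Real.exp (x / 2) := by
        have := Real.add_one_le_exp (x / 2); linarith
      rcases le_total x 1 with h1 | h1
      · have h2 : (1 + x) ^ m ≤ 2 ^ m := pow_le_pow_left₀ (by linarith) (by linarith) m
        have h3 : (2:ℝ) ^ m ≤ C := by
          rw [hC]; nlinarith [pow_pos (show (0:ℝ) < 4 by norm_num) m,
            (by positivity : (0:ℝ) < (Nat.factorial m : ℝ))]
        calc (1 + x) ^ m ≤ 2 ^ m := h2
          _ = 2 ^ m * 1 := by ring
          _ ≤ C * Real.exp (x / 2) := by
              apply mul_le_mul h3 hex zero_le_one hC0.le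
      · have h2 : (1 + x) ^ m ≤ (2 * x) ^ m := pow_le_pow_left₀ (by linarith) (by linarith) m
        have h3 : (x / 2) ^ m / (Nat.factorial m) ≤ Real.exp (x / 2) :=
          Real.pow_div_factorial_le_exp (x := x / 2) (by linarith) m
        have h4 : x ^ m ≤ 2 ^ m * (Nat.factorial m) * Real.exp (x / 2) := by
          have hfm : (0:ℝ) < (Nat.factorial m : ℝ) := by positivity
          rw [div_pow, div_div] at h3
          rw [div_le_iff₀ (by positivity)] at h3
          calc x ^ m ≤ Real.exp (x / 2) * (2 ^ m * (Nat.factorial m)) := h3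
            _ = 2 ^ m * (Nat.factorial m) * Real.exp (x / 2) := by ring
        calc (1 + x) ^ m ≤ (2 * x) ^ m := h2
          _ = 2 ^ m * x ^ m := by rw [mul_pow]
          _ ≤ 2 ^ m * (2 ^ m * (Nat.factorial m) * Real.exp (x / 2)) := by
              apply mul_le_mul_of_nonneg_left h4 (by positivity)
          _ = (4:ℝ) ^ m * (Nat.factorial m) * Real.exp (x / 2) := by
              rw [show (4:ℝ) = 2 * 2 by norm_num, mul_pow]; ring
          _ ≤ C * Real.exp (x / 2) := by
              apply mul_le_mul_of_nonneg_right _ (Real.exp_nonneg _)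
              rw [hC]; nlinarith [pow_pos (show (0:ℝ) < 2 by norm_num) m]
    -- combine
    have hexp_b : Real.exp ((b:ℝ) * x) * Real.exp ((a:ℝ) * x) = Real.exp ((m:ℝ) * x) := by
      rw [← Real.exp_add]; congr 1; rw [hm]; push_cast; ring
    have hgoal : x ^ m * Real.exp ((b:ℝ) * x)
        ≤ (C * Real.exp (-(x) / 2)) * (Real.exp x - 1) ^ m := by
      have e1 : x ^ m * Real.exp ((m:ℝ) * x) = (x * Real.exp x) ^ m := by
        rw [mul_pow, ← Real.exp_nat_mul]
      have e2 : ((1 + x) * (Real.exp x - 1)) ^ m = (1 + x) ^ m * (Real.exp x - 1) ^ m :=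
        mul_pow _ _ _
      have hDm : (0:ℝ) ≤ (Real.exp x - 1) ^ m := by positivity
      have step : x ^ m * Real.exp ((m:ℝ) * x)
          ≤ C * Real.exp (x / 2) * (Real.exp x - 1) ^ m := by
        rw [e1]
        calc (x * Real.exp x) ^ m ≤ ((1 + x) * (Real.exp x - 1)) ^ m := hApow
          _ = (1 + x) ^ m * (Real.exp x - 1) ^ m := e2
          _ ≤ C * Real.exp (x / 2) * (Real.exp x - 1) ^ m :=
              mul_le_mul_of_nonneg_right hB hDm
      have hax : Real.exp (-(a:ℝ) * x) ≤ Real.exp (-x) := by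
        apply Real.exp_le_exp.mpr
        have : (1:ℝ) ≤ (a:ℝ) := by exact_mod_cast ha
        nlinarith
      calc x ^ m * Real.exp ((b:ℝ) * x)
          = (x ^ m * Real.exp ((m:ℝ) * x)) * Real.exp (-(a:ℝ) * x) := by
            rw [mul_assoc, ← Real.exp_add]
            congr 2
            rw [hm]; push_cast; ring
        _ ≤ (C * Real.exp (x / 2) * (Real.exp x - 1) ^ m) * Real.exp (-(a:ℝ) * x) := by
            apply mul_le_mul_of_nonneg_right step (Real.exp_nonneg _)
        _ ≤ (C * Real.exp (x / 2) * (Real.exp x - 1) ^ m) * Real.exp (-x) := by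
            apply mul_le_mul_of_nonneg_left hax (by positivity)
        _ = (C * Real.exp (-(x) / 2)) * (Real.exp x - 1) ^ m := by
            rw [mul_comm (C * Real.exp (x / 2) * (Real.exp x - 1) ^ m) (Real.exp (-x)),
              ← mul_assoc, ← mul_assoc, mul_comm (Real.exp (-x)) C, mul_assoc C,
              ← Real.exp_add]
            ring_nf
    unfold gdef
    rw [div_le_iff₀ (by positivity : (0:ℝ) < (Real.exp (t^2) - 1) ^ (a + b))]
    calc (t ^ 2) ^ (a + b) * Real.exp ((b:ℝ) * t ^ 2) = x ^ m * Real.exp ((b:ℝ) * x) := rfl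
      _ ≤ (C * Real.exp (-(x) / 2)) * (Real.exp x - 1) ^ m := hgoal
      _ = C * Real.exp (-(t ^ 2) / 2) * (Real.exp (t ^ 2) - 1) ^ (a + b) := rfl

lemma gdef_measurable (a b : ℕ) : Measurable (gdef a b) := by
  unfold gdef
  fun_prop

lemma nontrivial_euclidean (d : ℕ) (hd : 1 ≤ d) : Nontrivial (EuclideanSpace ℝ (Fin d)) := by
  refine ⟨⟨EuclideanSpace.single ⟨0, hd⟩ 1, 0, ?_⟩⟩
  intro h
  have := congrArg (fun v => v ⟨0, hd⟩) h
  simp [EuclideanSpace.single] at this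

lemma integrable_gdef_norm (d : ℕ) (hd : 1 ≤ d) (a b : ℕ) (ha : 1 ≤ a) {k : ℝ} (hk : 0 < k) :
    Integrable (fun q : EuclideanSpace ℝ (Fin d) => gdef a b (‖q‖ / k)) := by
  have hk0 : k ≠ 0 := hk.ne'
  set c : ℝ := 1 / (2 * k ^ 2) with hc
  have hc0 : 0 < c := by positivity
  set C : ℝ := (2:ℝ) ^ (a + b) + 4 ^ (a + b) * (Nat.factorial (a + b)) with hCdef
  have hgauss : Integrable (fun q : EuclideanSpace ℝ (Fin d) => Real.exp (-c * ‖q‖ ^ 2)) := by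
    have h := (GaussianFourier.integrable_cexp_neg_mul_sq_norm_add_of_euclideanSpace (ι := Fin d)
      (b := (c : ℂ)) (by simpa using hc0) 0 (0 : EuclideanSpace ℝ (Fin d))).norm
    have heq : (fun q : EuclideanSpace ℝ (Fin d) =>
        ‖Complex.exp (-(c:ℂ) * (‖q‖:ℂ) ^ 2 + 0 * (inner ℝ (0 : EuclideanSpace ℝ (Fin d)) q : ℝ))‖)
        = fun q : EuclideanSpace ℝ (Fin d) => Real.exp (-c * ‖q‖ ^ 2) := by
      funext q
      rw [Complex.norm_exp]
      norm_num [← Complex.ofReal_pow]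
    rwa [heq] at h
  apply Integrable.mono' (hgauss.const_mul C)
  · exact ((gdef_measurable a b).comp (measurable_norm.div_const k)).aestronglyMeasurable
  · filter_upwards with q
    have ht : 0 ≤ ‖q‖ / k := by positivity
    rw [Real.norm_eq_abs, abs_of_nonneg (gdef_nonneg _ _ _)]
    calc gdef a b (‖q‖ / k) ≤ C * Real.exp (-((‖q‖ / k) ^ 2) / 2) := key_ineq a b ha ht
      _ = C * Real.exp (-c * ‖q‖ ^ 2) := by
          congr 1
          rw [hc, div_pow]
          field_simp

lemma sSphere_eq (d : ℕ) (hd : 1 ≤ d) :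
    (d : ℝ) * (volume (Metric.ball (0 : EuclideanSpace ℝ (Fin d)) 1)).toReal
      = 2 * Real.pi ^ ((d : ℝ) / 2) / Real.Gamma ((d : ℝ) / 2) := by
  have hd2 : (0:ℝ) < (d : ℝ) / 2 := by
    have : (0:ℝ) < (d:ℝ) := by exact_mod_cast hd
    linarith
  have hΓpos : 0 < Real.Gamma ((d : ℝ) / 2) := Real.Gamma_pos_of_pos hd2
  have : Nonempty (Fin d) := ⟨⟨0, hd⟩⟩
  rw [EuclideanSpace.volume_ball]
  simp only [Fintype.card_fin, ENNReal.ofReal_one, one_pow, one_mul]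
  rw [ENNReal.toReal_ofReal (by positivity)]
  have hπ : Real.sqrt Real.pi ^ d = Real.pi ^ ((d : ℝ) / 2) := by
    rw [Real.sqrt_eq_rpow, ← Real.rpow_natCast (Real.pi ^ ((1:ℝ)/2)) d,
      ← Real.rpow_mul Real.pi_pos.le]
    congr 1
    ring
  rw [hπ, Real.Gamma_add_one hd2.ne']
  field_simp

lemma pow_gdef (d a b : ℕ) (hd : 1 ≤ d) (t : ℝ) :
    t ^ (d - 1) * gdef a b t
      = t ^ (2 * a + 2 * b + d - 1) * Real.exp ((b:ℝ) * t ^ 2)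
        / (Real.exp (t ^ 2) - 1) ^ (a + b) := by
  unfold gdef
  rw [← pow_mul t 2 (a + b), mul_div_assoc', ← mul_assoc,
    ← pow_add t (d - 1) (2 * (a + b)), show (d - 1) + 2 * (a + b) = 2 * a + 2 * b + d - 1
    by omega]

lemma integral_scale (d a b : ℕ) (hd : 1 ≤ d) {k : ℝ} (hk : 0 < k) :
    ∫ y in Set.Ioi (0:ℝ), y ^ (d - 1) * gdef a b (y / k)
      = k ^ d * ∫ t in Set.Ioi (0:ℝ), t ^ (2 * a + 2 * b + d - 1) * Real.exp ((b:ℝ) * t ^ 2)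
        / (Real.exp (t ^ 2) - 1) ^ (a + b) := by
  have hk0 : k ≠ 0 := hk.ne'
  have h := integral_comp_mul_left_Ioi (fun y => y ^ (d - 1) * gdef a b (y / k)) 0 hk
  rw [mul_zero] at h
  have heq : (fun x : ℝ => (fun y => y ^ (d - 1) * gdef a b (y / k)) (k * x))
      = fun x : ℝ => k ^ (d - 1) * (x ^ (d - 1) * gdef a b x) := by
    funext x
    simp only
    rw [mul_div_cancel_left₀ x hk0, mul_pow]
    ring
  rw [heq] at h
  rw [MeasureTheory.integral_const_mul] at h
  simp only [smul_eq_mul] at h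
  have h2 : ∫ y in Set.Ioi (0:ℝ), y ^ (d - 1) * gdef a b (y / k)
      = k * (k ^ (d - 1) * ∫ x in Set.Ioi (0:ℝ), x ^ (d - 1) * gdef a b x) := by
    have h3 : k * (k ^ (d - 1) * ∫ x in Set.Ioi (0:ℝ), x ^ (d - 1) * gdef a b x)
        = k * (k⁻¹ * ∫ x in Set.Ioi (0:ℝ), x ^ (d - 1) * gdef a b (x / k)) := by rw [h]
    rw [← mul_assoc k k⁻¹, mul_inv_cancel₀ hk0, one_mul] at h3
    exact h3.symm
  rw [h2, ← mul_assoc, show k * k ^ (d - 1) = k ^ d by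
    rw [← pow_succ' k (d - 1), show d - 1 + 1 = d by omega]]
  congr 1
  apply MeasureTheory.setIntegral_congr_fun measurableSet_Ioi
  intro t _
  exact pow_gdef d a b hd t

lemma integral_gdef_norm (d : ℕ) (hd : 1 ≤ d) (a b : ℕ) {k : ℝ} (hk : 0 < k) :
    ∫ q : EuclideanSpace ℝ (Fin d), gdef a b (‖q‖ / k)
      = (2 * Real.pi ^ ((d : ℝ) / 2) / Real.Gamma ((d : ℝ) / 2))
        * (k ^ d * ∫ t in Set.Ioi (0:ℝ), t ^ (2 * a + 2 * b + d - 1)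
            * Real.exp ((b:ℝ) * t ^ 2) / (Real.exp (t ^ 2) - 1) ^ (a + b)) := by
  have : Nontrivial (EuclideanSpace ℝ (Fin d)) := nontrivial_euclidean d hd
  have h := MeasureTheory.integral_fun_norm_addHaar
    (volume : Measure (EuclideanSpace ℝ (Fin d))) (fun y => gdef a b (y / k))
  simp only [finrank_euclideanSpace, Fintype.card_fin, smul_eq_mul, nsmul_eq_mul, measureReal_def] at h
  rw [h]
  have : ∫ y in Set.Ioi (0:ℝ), y ^ (d - 1) * gdef a b (y / k)
      = k ^ d * ∫ t in Set.Ioi (0:ℝ), t ^ (2 * a + 2 * b + d - 1)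
          * Real.exp ((b:ℝ) * t ^ 2) / (Real.exp (t ^ 2) - 1) ^ (a + b) :=
    integral_scale d a b hd hk
  rw [this, ← sSphere_eq d hd]
  ring

lemma integrableOn_target (d a b : ℕ) (hd : 1 ≤ d) (ha : 1 ≤ a) :
    IntegrableOn (fun t : ℝ => t ^ (2 * a + 2 * b + d - 1) * Real.exp ((b:ℝ) * t ^ 2)
      / (Real.exp (t ^ 2) - 1) ^ (a + b)) (Set.Ioi 0) := by
  set C : ℝ := (2:ℝ) ^ (a + b) + 4 ^ (a + b) * (Nat.factorial (a + b)) with hCdef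
  have hbase : IntegrableOn (fun t : ℝ => C * (t ^ (((d:ℝ) - 1)) * Real.exp (-(1/2) * t ^ 2)))
      (Set.Ioi 0) :=
    (integrableOn_rpow_mul_exp_neg_mul_sq (by norm_num) (by
      have : (0:ℝ) < (d:ℝ) := by exact_mod_cast hd
      linarith)).const_mul C
  apply Integrable.mono' hbase
  · apply Measurable.aestronglyMeasurable
    fun_prop
  · rw [MeasureTheory.ae_restrict_iff' measurableSet_Ioi]
    filter_upwards with t ht
    simp only [Set.mem_Ioi] at ht
    rw [← pow_gdef d a b hd t]
    have h1 : 0 ≤ t ^ (d - 1) * gdef a b t := mul_nonneg (by positivity) (gdef_nonneg _ _ _)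
    rw [Real.norm_eq_abs, abs_of_nonneg h1]
    have h2 : gdef a b t ≤ C * Real.exp (-(t ^ 2) / 2) := key_ineq a b ha ht.le
    calc t ^ (d - 1) * gdef a b t ≤ t ^ (d - 1) * (C * Real.exp (-(t ^ 2) / 2)) :=
          mul_le_mul_of_nonneg_left h2 (by positivity)
      _ = C * (t ^ (((d:ℝ) - 1)) * Real.exp (-(1/2) * t ^ 2)) := by
          rw [← Real.rpow_natCast t (d - 1), show (((d - 1 : ℕ)):ℝ) = (d:ℝ) - 1 by
            have : 1 ≤ d := hd
            push_cast [Nat.cast_sub this]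
            ring]
          ring_nf

theorem stmt_14 (d : ℕ) (hd : 1 ≤ d) (l : ℕ) :
    (∀ a ∈ Finset.Icc 1 (l + 1), ∀ b ∈ Finset.Icc 0 (l + 1 - a),
      IntegrableOn
        (fun t : ℝ => t ^ (2 * a + 2 * b + d - 1) * Real.exp ((b : ℝ) * t ^ 2)
          / (Real.exp (t ^ 2) - 1) ^ (a + b)) (Set.Ioi 0)) ∧
    ∃ R : ℝ, 0 ≤ R ∧
      R = sSphere d * ∑ a ∈ Finset.Icc 1 (l + 1), ∑ b ∈ Finset.Icc 0 (l + 1 - a),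
            |betaC l (a : ℤ) (b : ℤ)| *
              ∫ t in Set.Ioi (0 : ℝ), t ^ (2 * a + 2 * b + d - 1) * Real.exp ((b : ℝ) * t ^ 2)
                / (Real.exp (t ^ 2) - 1) ^ (a + b) ∧
      ∀ k : ℝ, 0 < k →
        (∫ q, |iteratedDeriv l (fun s => rbar d q s) k|)
          ≤ R * k ^ ((2 : ℤ) + (d : ℤ) - (l : ℤ)) := by
  have hd2 : (0:ℝ) < (d : ℝ) / 2 := by
    have : (0:ℝ) < (d:ℝ) := by exact_mod_cast hd
    linarith
  have hS0 : 0 ≤ sSphere d := by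
    unfold sSphere
    exact div_nonneg (by positivity) (Real.Gamma_pos_of_pos hd2).le
  have hInonneg : ∀ a b : ℕ, 0 ≤ ∫ t in Set.Ioi (0:ℝ),
      t ^ (2 * a + 2 * b + d - 1) * Real.exp ((b : ℝ) * t ^ 2)
        / (Real.exp (t ^ 2) - 1) ^ (a + b) := by
    intro a b
    apply MeasureTheory.setIntegral_nonneg measurableSet_Ioi
    intro t ht
    have hden : (0:ℝ) ≤ Real.exp (t ^ 2) - 1 := by
      nlinarith [Real.add_one_le_exp (t ^ 2), sq_nonneg t]
    apply div_nonneg _ (pow_nonneg hden _)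
    have : (0:ℝ) ≤ t := le_of_lt ht
    positivity
  constructor
  · intro a ha b _
    simp only [Finset.mem_Icc] at ha
    exact integrableOn_target d a b hd ha.1
  refine ⟨_, ?_, rfl, ?_⟩
  · apply mul_nonneg hS0
    apply Finset.sum_nonneg
    intro a _
    apply Finset.sum_nonneg
    intro b _
    exact mul_nonneg (abs_nonneg _) (hInonneg a b)
  · intro k hk
    have hk0 : k ≠ 0 := hk.ne'
    haveI : Nontrivial (EuclideanSpace ℝ (Fin d)) := nontrivial_euclidean d hd
    set G : EuclideanSpace ℝ (Fin d) → ℝ := fun q =>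
      ∑ a ∈ Finset.Icc 1 (l + 1), ∑ b ∈ Finset.Icc 0 (l + 1 - a),
        |betaC l (a : ℤ) (b : ℤ)| * (k ^ ((2:ℤ) - (l:ℤ)) * gdef a b (‖q‖ / k)) with hGdef
    have hGint : Integrable G := by
      apply MeasureTheory.integrable_finset_sum
      intro a ha
      apply MeasureTheory.integrable_finset_sum
      intro b _
      simp only [Finset.mem_Icc] at ha
      exact ((integrable_gdef_norm d hd a b ha.1 hk).const_mul _).const_mul _
    have hbound : ∀ q : EuclideanSpace ℝ (Fin d), q ≠ 0 →
        |iteratedDeriv l (fun s => rbar d q s) k| ≤ G q := by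
      intro q hq
      have hnq : 0 < ‖q‖ := norm_pos_iff.mpr hq
      set t : ℝ := ‖q‖ / k with htdef
      have ht : 0 < t := by positivity
      have htk : 0 < t * k := mul_pos ht hk
      have hx : 0 < (t * k) ^ 2 := pow_pos htk 2
      have hfun : (fun s : ℝ => rbar d q s)
          = fun s => (t * k) ^ 2 / (Real.exp ((t * k) ^ 2 / s ^ 2) - 1) := by
        funext s
        rw [htdef, div_mul_cancel₀ _ hk0]
        simp [rbar, hq]
      rw [hfun, iteratedDeriv_Fsum hx l k hk, Fsum_eq_nat]
      calc |∑ a ∈ Finset.Icc 1 (l + 1), ∑ b ∈ Finset.Icc 0 (l + 1 - a),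
            betaC l (a : ℤ) (b : ℤ) * Tm ((t * k) ^ 2) l (a : ℤ) (b : ℤ) k|
          ≤ ∑ a ∈ Finset.Icc 1 (l + 1), |∑ b ∈ Finset.Icc 0 (l + 1 - a),
            betaC l (a : ℤ) (b : ℤ) * Tm ((t * k) ^ 2) l (a : ℤ) (b : ℤ) k| :=
            Finset.abs_sum_le_sum_abs _ _
        _ ≤ ∑ a ∈ Finset.Icc 1 (l + 1), ∑ b ∈ Finset.Icc 0 (l + 1 - a),
            |betaC l (a : ℤ) (b : ℤ) * Tm ((t * k) ^ 2) l (a : ℤ) (b : ℤ) k| :=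
            Finset.sum_le_sum fun a _ => Finset.abs_sum_le_sum_abs _ _
        _ = G q := by
            rw [hGdef]
            apply Finset.sum_congr rfl
            intro a _
            apply Finset.sum_congr rfl
            intro b _
            rw [Tm_eq_g hk ht, abs_mul]
            congr 1
            exact abs_of_nonneg (mul_nonneg (zpow_nonneg hk.le _) (gdef_nonneg _ _ _))
    have hae : ∀ᵐ q : EuclideanSpace ℝ (Fin d) ∂volume,
        |iteratedDeriv l (fun s => rbar d q s) k| ≤ G q := by
      have h0 : volume ({(0 : EuclideanSpace ℝ (Fin d))} : Set (EuclideanSpace ℝ (Fin d)))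
          = 0 := measure_singleton 0
      filter_upwards [MeasureTheory.measure_eq_zero_iff_ae_notMem.mp h0] with q hq
      exact hbound q (by simpa using hq)
    have hmono : (∫ q, |iteratedDeriv l (fun s => rbar d q s) k|) ≤ ∫ q, G q :=
      MeasureTheory.integral_mono_of_nonneg (Filter.Eventually.of_forall fun q => abs_nonneg _)
        hGint hae
    refine le_trans hmono (le_of_eq ?_)
    have hkpow : k ^ ((2:ℤ) - (l:ℤ)) * k ^ (d:ℕ) = k ^ ((2:ℤ) + (d:ℤ) - (l:ℤ)) := by
      rw [← zpow_natCast k d, ← zpow_add₀ hk0]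
      congr 1
      ring
    rw [hGdef]
    rw [MeasureTheory.integral_finset_sum _ (fun a ha => by
      apply MeasureTheory.integrable_finset_sum
      intro b _
      simp only [Finset.mem_Icc] at ha
      exact ((integrable_gdef_norm d hd a b ha.1 hk).const_mul _).const_mul _)]
    rw [Finset.sum_congr rfl (fun a (ha : a ∈ Finset.Icc 1 (l+1)) => by
      rw [MeasureTheory.integral_finset_sum _ (fun b _ => by
        simp only [Finset.mem_Icc] at ha
        exact ((integrable_gdef_norm d hd a b ha.1 hk).const_mul _).const_mul _)])]
    simp only [MeasureTheory.integral_const_mul]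
    rw [Finset.mul_sum, Finset.sum_mul]
    apply Finset.sum_congr rfl
    intro a _
    rw [Finset.mul_sum, Finset.sum_mul]
    apply Finset.sum_congr rfl
    intro b _
    rw [integral_gdef_norm d hd a b hk]
    show |betaC l (a : ℤ) (b : ℤ)| * (k ^ ((2:ℤ) - (l:ℤ)) * (_ * (k ^ d * _))) = _
    rw [show (2 * Real.pi ^ ((d : ℝ) / 2) / Real.Gamma ((d : ℝ) / 2)) = sSphere d from rfl,
      ← hkpow]
    ring
end

section
/- Let A be a Banach algebra with unit, let I ⊆ ℝ be an open interval, and let u : I → A be n-times continuously differentiable such that u(x) is invertible for every x ∈ I. Then the map x ↦ u(x)^{−1} is n-times differentiable and for every n ∈ ℕ and x ∈ I: (d/dx)^n (u(x)^{−1}) = Σ_{c ∈ C_n} (−1)^{#c} · (n!/c!) · u(x)^{−1} · ∏_{l=1}^{#c} ( u^{(c_l)}(x) · u(x)^{−1} ), where the (ordered) product is taken from l = 1 to #c. -/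
/-!
Differentiating `u * u⁻¹ = 1` with the Leibniz rule expresses `(u⁻¹)^{(m+1)}` through the lower
derivatives: `(u⁻¹)^{(m+1)} = -u⁻¹ ∑_k C(m+1, k+1) u^{(k+1)} (u⁻¹)^{(m-k)}`. Splitting off the first
block `k + 1` of a composition of `m + 1` shows that the composition sum satisfies the same
recursion, so the two agree by strong induction.
-/

open Finset

namespace Composition

def cons {m : ℕ} (k : Fin (m + 1)) (c : Composition (m - k)) : Composition (m + 1) where
  blocks := (k + 1) :: c.blocks
  blocks_pos := by
    simp only [List.mem_cons, forall_eq_or_imp]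
    exact ⟨k.val.succ_pos, fun _ => c.blocks_pos⟩
  blocks_sum := by simp only [List.sum_cons, c.blocks_sum]; omega

lemma blocks_ne_nil {m : ℕ} (c : Composition (m + 1)) : c.blocks ≠ [] := by
  simp [blocks_eq_nil]

def consEquiv (m : ℕ) : (Σ k : Fin (m + 1), Composition (m - k)) ≃ Composition (m + 1) where
  toFun p := cons p.1 p.2
  invFun c :=
    have hhead : c.blocks.head c.blocks_ne_nil :: c.blocks.tail = c.blocks := List.cons_head_tail _
    have hpos : 0 < c.blocks.head c.blocks_ne_nil := c.blocks_pos (List.head_mem _)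
    have hsum : c.blocks.head c.blocks_ne_nil + c.blocks.tail.sum = m + 1 := by
      rw [← List.sum_cons, hhead, c.blocks_sum]
    ⟨⟨c.blocks.head c.blocks_ne_nil - 1, by omega⟩,
      ⟨c.blocks.tail, fun h => c.blocks_pos (List.mem_of_mem_tail h), by simp only; omega⟩⟩
  left_inv := fun ⟨k, c⟩ => rfl
  right_inv c := by
    ext1
    have hpos : 0 < c.blocks.head c.blocks_ne_nil := c.blocks_pos (List.head_mem _)
    simp only [cons]
    rw [Nat.sub_add_cancel hpos, List.cons_head_tail]

lemma sum_eq_sum_cons {M : Type*} [AddCommMonoid M] (m : ℕ) (f : Composition (m + 1) → M) :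
    ∑ c, f c = ∑ k : Fin (m + 1), ∑ c : Composition (m - k), f (cons k c) :=
  (Fintype.sum_equiv (consEquiv m) _ _ fun _ => rfl).symm.trans (Fintype.sum_sigma _)

end Composition

section InverseFormula

variable (𝕜 : Type*) {A : Type*} [Field 𝕜] [Ring A] [Algebra 𝕜 A]

def compositionInvSum (W : A) (V : ℕ → A) (m : ℕ) : A :=
  ∑ c : Composition m, ((-1 : 𝕜) ^ c.length * (m.factorial : 𝕜)
    / ((c.blocks.map Nat.factorial).prod : ℕ)) • (W * (c.blocks.map (fun j => V j * W)).prod)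

variable {𝕜}

@[simp]
lemma compositionInvSum_zero (W : A) (V : ℕ → A) : compositionInvSum 𝕜 W V 0 = W := by
  have hblocks (c : Composition 0) : c.blocks = [] := c.blocks_eq_nil.2 rfl
  simp [compositionInvSum, Composition.length, hblocks, composition_card]

lemma compositionInvSum_succ [CharZero 𝕜] (W : A) (V : ℕ → A) (m : ℕ) :
    compositionInvSum 𝕜 W V (m + 1) = -(W * ∑ k ∈ range (m + 1),
      (m + 1).choose (k + 1) • (V (k + 1) * compositionInvSum 𝕜 W V (m - k))) := by
  simp only [compositionInvSum, Composition.sum_eq_sum_cons, mul_sum, smul_sum, ← sum_neg_distrib]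
  rw [← Fin.sum_univ_eq_sum_range]
  refine sum_congr rfl fun k _ => sum_congr rfl fun c _ => ?_
  simp only [Composition.cons, Composition.length, List.length_cons, List.map_cons, List.prod_cons]
  have hP : ((c.blocks.map Nat.factorial).prod : 𝕜) ≠ 0 :=
    Nat.cast_ne_zero.2 (List.prod_ne_zero (by simp [Nat.factorial_ne_zero]))
  have hk : (((k : ℕ) + 1).factorial : 𝕜) ≠ 0 := Nat.cast_ne_zero.2 (Nat.factorial_ne_zero _)
  have hfac : ((m + 1).factorial : 𝕜) =
      (m + 1).choose (k + 1) * ((k : ℕ) + 1).factorial * (m - k).factorial := by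
    have := Nat.choose_mul_factorial_mul_factorial (by omega : (k : ℕ) + 1 ≤ m + 1)
    rw [Nat.add_sub_add_right] at this
    exact_mod_cast this.symm
  rw [← Nat.cast_smul_eq_nsmul 𝕜, mul_smul_comm, mul_smul_comm, mul_smul_comm, smul_smul,
    ← neg_smul, ← mul_assoc (V _), hfac]
  congr 1
  rw [Nat.cast_mul]
  field_simp
  ring

end InverseFormula

section InverseDerivatives

variable {𝕜 : Type*} [NontriviallyNormedField 𝕜] {A : Type*} [NormedRing A] [NormedAlgebra 𝕜 A]
  [HasSummableGeomSeries A] {u : 𝕜 → A} {s : Set 𝕜} {x : 𝕜}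

lemma ContDiffWithinAt.ringInverse {n : WithTop ℕ∞} (hu : ContDiffWithinAt 𝕜 n u s x)
    (hx : IsUnit (u x)) : ContDiffWithinAt 𝕜 n (fun y => Ring.inverse (u y)) s x :=
  (hx.unit_spec ▸ contDiffAt_ringInverse 𝕜 hx.unit).comp_contDiffWithinAt x hu

lemma iteratedDerivWithin_ringInverse_succ (hs : UniqueDiffOn 𝕜 s) (hx : x ∈ s) {m : ℕ}
    (hu : ContDiffWithinAt 𝕜 ↑(m + 1) u s x) (hinv : ∀ y ∈ s, IsUnit (u y)) :
    iteratedDerivWithin (m + 1) (fun y => Ring.inverse (u y)) s x =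
      -(Ring.inverse (u x) * ∑ k ∈ range (m + 1), (m + 1).choose (k + 1) •
        (iteratedDerivWithin (k + 1) u s x *
          iteratedDerivWithin (m - k) (fun y => Ring.inverse (u y)) s x)) := by
  have hleibniz := iteratedDerivWithin_mul hx hs hu (hu.ringInverse (hinv x hx))
  have hmul : Set.EqOn (u * fun y => Ring.inverse (u y)) (fun _ => 1) s :=
    fun y hy => Ring.mul_inverse_cancel _ (hinv y hy)
  have hone : iteratedDerivWithin (m + 1) (u * fun y => Ring.inverse (u y)) s x = 0 := by
    rw [iteratedDerivWithin_congr hmul hx, iteratedDerivWithin_const, if_neg m.succ_ne_zero]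
  rw [hone, sum_range_succ', eq_comm, add_eq_zero_iff_eq_neg'] at hleibniz
  simp only [Nat.add_sub_add_right, ← nsmul_eq_mul, smul_mul_assoc, Nat.choose_zero_right,
    one_smul, iteratedDerivWithin_zero, Nat.sub_zero] at hleibniz
  rw [← mul_neg, ← hleibniz, ← mul_assoc, Ring.inverse_mul_cancel _ (hinv x hx), one_mul]

theorem iteratedDerivWithin_ringInverse [CharZero 𝕜] (hs : UniqueDiffOn 𝕜 s) (hx : x ∈ s) {n : ℕ}
    (hu : ContDiffWithinAt 𝕜 n u s x) (hinv : ∀ y ∈ s, IsUnit (u y)) :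
    iteratedDerivWithin n (fun y => Ring.inverse (u y)) s x =
      compositionInvSum 𝕜 (Ring.inverse (u x)) (fun j => iteratedDerivWithin j u s x) n := by
  induction n using Nat.strong_induction_on with
  | _ n ih =>
    cases n with
    | zero => simp
    | succ m =>
      rw [iteratedDerivWithin_ringInverse_succ hs hx hu hinv, compositionInvSum_succ]
      congr 2
      refine sum_congr rfl fun k hk => ?_
      have hkm := mem_range.1 hk
      rw [ih (m - k) (by omega) (hu.of_le (by norm_cast; omega))]

end InverseDerivatives

theorem stmt_17_general (A : Type*) [NormedRing A] [NormedAlgebra ℝ A] [CompleteSpace A]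
    (a b : ℝ) (u : ℝ → A) (n : ℕ)
    (hu : ContDiffOn ℝ n u (Set.Ioo a b))
    (hinv : ∀ x ∈ Set.Ioo a b, IsUnit (u x)) :
    ContDiffOn ℝ n (fun x => Ring.inverse (u x)) (Set.Ioo a b) ∧
    ∀ x ∈ Set.Ioo a b,
      iteratedDerivWithin n (fun y => Ring.inverse (u y)) (Set.Ioo a b) x =
        ∑ c : Composition n,
          ((-1 : ℝ) ^ c.length * (n.factorial : ℝ)
              / ((c.blocks.map Nat.factorial).prod : ℕ)) •
            (Ring.inverse (u x) *
              (c.blocks.map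
                (fun j => iteratedDerivWithin j u (Set.Ioo a b) x * Ring.inverse (u x))).prod) :=
  ⟨fun x hx => (hu x hx).ringInverse (hinv x hx),
    fun x hx => iteratedDerivWithin_ringInverse (uniqueDiffOn_Ioo a b) hx (hu x hx) hinv⟩

theorem stmt_17 (A : Type*) [NormedRing A] [NormedAlgebra ℝ A] [CompleteSpace A]
    (a b : ℝ) (u : ℝ → A) (n : ℕ) (hn : 1 ≤ n)
    (hu : ContDiffOn ℝ n u (Set.Ioo a b))
    (hinv : ∀ x ∈ Set.Ioo a b, IsUnit (u x)) :
    ContDiffOn ℝ n (fun x => Ring.inverse (u x)) (Set.Ioo a b) ∧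
    ∀ x ∈ Set.Ioo a b,
      iteratedDerivWithin n (fun y => Ring.inverse (u y)) (Set.Ioo a b) x =
        ∑ c : Composition n,
          ((-1 : ℝ) ^ c.length * (n.factorial : ℝ)
              / ((c.blocks.map Nat.factorial).prod : ℕ)) •
            (Ring.inverse (u x) *
              (c.blocks.map
                (fun j => iteratedDerivWithin j u (Set.Ioo a b) x * Ring.inverse (u x))).prod) :=
  stmt_17_general A a b u n hu hinv
end
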